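/- Let I be a paracyclic preorder, and let (π_S: L_S → S, σ) and (π_T: L_T → T, τ) be families of broken paracycles equipped with I-sections. Suppose f: S → T is a homeomorphism and f̃: L_S → L_T is a continuous map with π_T ∘ f̃ = f ∘ π_S, such that f̃ is ℝ-equivariant (f̃(t·x) = t·f̃(x) for all t ∈ ℝ) and f̃(σ(s,i)) = τ(f(s),i) for all s ∈ S and i ∈ I. Then f̃ is a homeomorphism; in particular (f, f̃) is an isomorphism of families of broken paracycles. -/

import Mathlib

open Topology

noncomputable section

/-! ### Combinatorial index data: parasimplices and paracyclic preorders -/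

/-- A set with a "preorder" relation and a `ℤ`-action. -/
structure IdxData (I : Type*) where
  le : I → I → Prop
  shift : ℤ → I → I

namespace IdxData

variable {I : Type*}

/-- `D` is a parasimplex. -/
structure IsParasimplex (D : IdxData I) : Prop where
  le_refl : ∀ i, D.le i i
  le_trans : ∀ i j k, D.le i j → D.le j k → D.le i k
  le_antisymm : ∀ i j, D.le i j → D.le j i → i = j
  le_total : ∀ i j, D.le i j ∨ D.le j i
  shift_zero : ∀ i, D.shift 0 i = i
  shift_add : ∀ m n i, D.shift (m + n) i = D.shift m (D.shift n i)
  shift_mono : ∀ n i j, D.le i j → D.le (D.shift n i) (D.shift n j)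
  le_shift_one : ∀ i, D.le i (D.shift 1 i)
  shift_one_ne : ∀ i, D.shift 1 i ≠ i
  between_finite : ∀ i j, D.le i j → {k | D.le i k ∧ D.le k j}.Finite

/-- `D` is a paracyclic preorder. -/
structure IsParacyclicPreorder (D : IdxData I) : Prop where
  countable : Countable I
  le_refl : ∀ i, D.le i i
  le_trans : ∀ i j k, D.le i j → D.le j k → D.le i k
  le_total : ∀ i j, D.le i j ∨ D.le j i
  shift_zero : ∀ i, D.shift 0 i = i
  shift_add : ∀ m n i, D.shift (m + n) i = D.shift m (D.shift n i)
  shift_free : ∀ n i, D.shift n i = i → n = 0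
  shift_mono_one : ∀ i j, D.le i j → D.le (D.shift 1 i) (D.shift 1 j)
  le_shift_one : ∀ i, D.le i (D.shift 1 i)
  not_shift_one_le : ∀ i, ¬ D.le (D.shift 1 i) i
  between_classes_finite : ∀ i j, D.le i j →
    ((Quot.mk fun a b => D.le a b ∧ D.le b a) '' {k | D.le i k ∧ D.le k j}).Finite

/-- The dual `𝔻 I`: weakly order-preserving surjections onto `{0 < 1}`. -/
def DType (D : IdxData I) : Type _ :=
  {e : I → Fin 2 // (∀ i j, D.le i j → e i ≤ e j) ∧ Function.Surjective e}

/-- The order and `ℤ`-action on `𝔻 I`. -/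
def DData (D : IdxData I) (hD : D.IsParasimplex) : IdxData (D.DType) where
  le e e' := ∀ i, e.1 i ≤ e'.1 i
  shift n e :=
    ⟨fun i => e.1 (D.shift (-n) i),
     fun i j hij => e.2.1 _ _ (hD.shift_mono _ _ _ hij),
     fun b => by
      obtain ⟨i, hi⟩ := e.2.2 b
      refine ⟨D.shift n i, ?_⟩
      show e.1 (D.shift (-n) (D.shift n i)) = b
      rw [← hD.shift_add, neg_add_cancel, hD.shift_zero, hi]⟩

end IdxData

/-! ### Broken paracycles -/

/-- Data of a `ℤ × ℝ`-action and an order on a space. -/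
structure ParaData (L : Type*) where
  act : ℤ × ℝ → L → L
  le : L → L → Prop

namespace ParaData

/-- The set of `ℝ`-fixed points. -/
def rFixed {L : Type*} (D : ParaData L) : Set L := {x | ∀ t : ℝ, D.act (0, t) x = x}

/-- Definition of a broken paracycle. -/
structure IsBrokenParacycle {L : Type*} [TopologicalSpace L] (D : ParaData L) : Prop where
  act_zero : ∀ x, D.act 0 x = x
  act_add : ∀ g h x, D.act (g + h) x = D.act g (D.act h x)
  act_cont : Continuous fun p : (ℤ × ℝ) × L => D.act p.1 p.2
  exists_homeo : ∃ φ : L ≃ₜ ℝ, ∀ x y, D.le x y ↔ φ x ≤ φ y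
  z_free : ∀ (n : ℤ) (x : L), D.act (n, 0) x = x → n = 0
  r_directed : ∀ t : ℝ, 0 ≤ t → ∀ x, D.le x (D.act (0, t) x)
  z_directed : ∀ x, D.le x (D.act (1, 0) x)
  fixed_discrete : DiscreteTopology D.rFixed
  fixed_nonempty : D.rFixed.Nonempty

open Classical in
/-- The translation distance on a broken paracycle, valued in `[-∞,∞]`. -/
noncomputable def dist {L : Type*} (D : ParaData L) (x y : L) : EReal :=
  if h : ∃ t : ℝ, D.act (0, t) x = y then ((h.choose : ℝ) : EReal)
  else if D.le x y then ⊤ else ⊥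

end ParaData

/-! ### Families of broken paracycles -/

/-- A continuous map `π : E → S` equipped with a continuous fiber-preserving
`ℤ × ℝ`-action and a linear order on each fiber. -/
structure PreFamily (S E : Type*) [TopologicalSpace S] [TopologicalSpace E] where
  π : E → S
  act : ℤ × ℝ → E → E
  fle : E → E → Prop
  π_cont : Continuous π
  act_zero : ∀ x, act 0 x = x
  act_add : ∀ g h x, act (g + h) x = act g (act h x)
  act_cont : Continuous fun p : (ℤ × ℝ) × E => act p.1 p.2
  act_fiber : ∀ g x, π (act g x) = π x
  fle_fiber : ∀ x y, fle x y → π x = π y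
  fle_refl : ∀ x, fle x x
  fle_trans : ∀ x y z, fle x y → fle y z → fle x z
  fle_antisymm : ∀ x y, fle x y → fle y x → x = y
  fle_total : ∀ x y, π x = π y → fle x y ∨ fle y x

namespace PreFamily

variable {S E : Type*} [TopologicalSpace S] [TopologicalSpace E]

/-- The fiber over `s`, with its induced `ℤ × ℝ`-action and order. -/
def fiberData (F : PreFamily S E) (s : S) : ParaData {x : E // F.π x = s} where
  act g x := ⟨F.act g x.1, by rw [F.act_fiber]; exact x.2⟩
  le x y := F.fle x.1 y.1

/-- The `ℝ`-fixed locus of the total space. -/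
def rFixed (F : PreFamily S E) : Set E := {x | ∀ t : ℝ, F.act (0, t) x = x}

/-- (Q1): each fiber is a broken paracycle. -/
def Q1 (F : PreFamily S E) : Prop := ∀ s : S, (F.fiberData s).IsBrokenParacycle

/-- The relation "lying in the same `ℤ`-orbit". -/
def zrel (F : PreFamily S E) (x y : E) : Prop := ∃ n : ℤ, F.act (n, 0) x = y

/-- The quotient of the total space by the `ℤ`-action. -/
def ZQuot (F : PreFamily S E) : Type _ := Quot F.zrel

instance (F : PreFamily S E) : TopologicalSpace F.ZQuot :=
  inferInstanceAs (TopologicalSpace (Quot F.zrel))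

/-- The projection `L_S/ℤ → S`. -/
def qπ (F : PreFamily S E) : F.ZQuot → S :=
  Quot.lift F.π (by rintro x y ⟨n, rfl⟩; rw [F.act_fiber])

/-- The induced `ℝ`-action on `L_S/ℤ`. -/
def qract (F : PreFamily S E) (t : ℝ) : F.ZQuot → F.ZQuot :=
  Quot.map (F.act (0, t)) (by
    rintro x y ⟨n, rfl⟩
    exact ⟨n, by rw [← F.act_add, ← F.act_add]; ring_nf⟩)

/-- The `ℝ`-fixed locus of `L_S/ℤ`. -/
def qrFixed (F : PreFamily S E) : Set F.ZQuot := {q | ∀ t : ℝ, F.qract t q = q}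

/-- (Q2): the `ℝ`-fixed locus is unramified modulo `ℤ`. -/
def Q2 (F : PreFamily S E) : Prop :=
  ∀ s : S, ∃ U : Set S, IsOpen U ∧ s ∈ U ∧
    ∃ (m : ℕ) (K : Fin m → Set F.ZQuot),
      ({q | q ∈ F.qrFixed ∧ F.qπ q ∈ U} = ⋃ a, K a) ∧
      (∀ a b, a ≠ b → Disjoint (K a) (K b)) ∧
      (∀ a, IsClosed (Subtype.val ⁻¹' (K a) : Set (F.qπ ⁻¹' U))) ∧
      (∀ a, ∃ f : (K a) → (U : Set S),
        (∀ q, (f q : S) = F.qπ q.1) ∧ IsClosedEmbedding f)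

/-- (Q3): the projection `L_S/ℤ → S` is a closed map. -/
def Q3 (F : PreFamily S E) : Prop := IsClosedMap F.qπ

/-- The fiber product `L_S ×_S L_S`. -/
def fibProd (F : PreFamily S E) : Set (E × E) := {p | F.π p.1 = F.π p.2}

/-- (Q4): the fiberwise order relation is closed in the fiber product. -/
def Q4 (F : PreFamily S E) : Prop :=
  IsClosed {p : F.fibProd | F.fle p.1.1 p.1.2}

/-- (Q5): local lifting away from the fixed locus. -/
def Q5 (F : PreFamily S E) : Prop :=
  ∀ x : E, x ∉ F.rFixed →
    ∃ U : Set S, IsOpen U ∧ F.π x ∈ U ∧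
      ∃ σ : U → E, Continuous σ ∧ (∀ u, F.π (σ u) = (u : S)) ∧
        (∀ u, σ u ∉ F.rFixed) ∧ (∀ u : U, (u : S) = F.π x → σ u = x)

/-- A family of broken paracycles is a datum satisfying (Q1)–(Q5). -/
def IsFamily (F : PreFamily S E) : Prop := F.Q1 ∧ F.Q2 ∧ F.Q3 ∧ F.Q4 ∧ F.Q5

open Classical in
/-- The fiberwise translation distance. -/
noncomputable def fdist (F : PreFamily S E) (x y : E) : EReal :=
  if h : ∃ t : ℝ, F.act (0, t) x = y then ((h.choose : ℝ) : EReal)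
  else if F.fle x y then ⊤ else ⊥

/-- The restriction of a family to a subset of the base. -/
def restrict (F : PreFamily S E) (U : Set S) : PreFamily U (F.π ⁻¹' U) where
  π x := ⟨F.π x.1, x.2⟩
  act g x := ⟨F.act g x.1, by simp only [Set.mem_preimage, F.act_fiber]; exact x.2⟩
  fle x y := F.fle x.1 y.1
  π_cont := Continuous.subtype_mk (F.π_cont.comp continuous_subtype_val) _
  act_zero x := by simp [F.act_zero]
  act_add g h x := by simp [F.act_add]
  act_cont := by
    apply Continuous.subtype_mk
    exact F.act_cont.comp (continuous_fst.prodMk (continuous_subtype_val.comp continuous_snd))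
  act_fiber g x := by simp [F.act_fiber]
  fle_fiber x y h := by
    apply Subtype.ext; exact F.fle_fiber _ _ h
  fle_refl x := F.fle_refl x.1
  fle_trans x y z := F.fle_trans x.1 y.1 z.1
  fle_antisymm x y h h' := Subtype.ext (F.fle_antisymm _ _ h h')
  fle_total x y h := F.fle_total x.1 y.1 (congrArg Subtype.val h)

/-- An `I`-section of a family of broken paracycles. -/
structure IsISection {I : Type*} (F : PreFamily S E) (D : IdxData I) (σ : S × I → E) : Prop where
  cont : ∀ i, Continuous fun s => σ (s, i)
  sect : ∀ s i, F.π (σ (s, i)) = s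
  not_fixed : ∀ s i, σ (s, i) ∉ F.rFixed
  surj : ∀ (s : S) (x : E), F.π x = s → x ∉ F.rFixed →
    ∃ (i : I) (t : ℝ), F.act (0, t) (σ (s, i)) = x
  directed : ∀ s i i', D.le i i' → ∃ t : ℝ, F.fle (F.act (0, t) (σ (s, i))) (σ (s, i'))
  equivariant : ∀ s i, σ (s, D.shift 1 i) = F.act (1, 0) (σ (s, i))

end PreFamily

namespace BPAux

open Set Filter Function

structure RModel : Type where
  w : ℤ × ℝ → ℝ → ℝ
  act0 : ∀ r, w 0 r = r
  actAdd : ∀ g h r, w (g + h) r = w g (w h r)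
  cont : Continuous fun p : (ℤ × ℝ) × ℝ => w p.1 p.2
  zfree : ∀ (n : ℤ) (r : ℝ), w (n, 0) r = r → n = 0
  rdir : ∀ t : ℝ, 0 ≤ t → ∀ r, r ≤ w (0, t) r
  zdir : ∀ r, r ≤ w (1, 0) r
  discr : DiscreteTopology {r : ℝ | ∀ t : ℝ, w (0, t) r = r}
  fixNe : {r : ℝ | ∀ t : ℝ, w (0, t) r = r}.Nonempty

namespace RModel

variable (M : RModel)

def fix : Set ℝ := {r : ℝ | ∀ t : ℝ, M.w (0, t) r = r}

lemma discr' : DiscreteTopology M.fix := M.discr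
lemma fixNe' : M.fix.Nonempty := M.fixNe

lemma contW (g : ℤ × ℝ) : Continuous (M.w g) :=
  M.cont.comp (continuous_const.prodMk continuous_id)

lemma contT (r : ℝ) : Continuous fun t : ℝ => M.w (0, t) r := by
  have : Continuous fun t : ℝ => (((0 : ℤ), t), r) :=
    ((continuous_const.prodMk continuous_id).prodMk continuous_const)
  exact M.cont.comp this

lemma leftInv (g : ℤ × ℝ) (r : ℝ) : M.w (-g) (M.w g r) = r := by
  rw [← M.actAdd, neg_add_cancel, M.act0]

lemma injW (g : ℤ × ℝ) : Injective (M.w g) := by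
  intro a b h
  have := congrArg (M.w (-g)) h
  rwa [M.leftInv, M.leftInv] at this

lemma wAddComm (g h : ℤ × ℝ) (r : ℝ) : M.w g (M.w h r) = M.w h (M.w g r) := by
  rw [← M.actAdd, ← M.actAdd, add_comm]

lemma fix_inv {r : ℝ} (hr : r ∈ M.fix) (g : ℤ × ℝ) : M.w g r ∈ M.fix := by
  intro t
  rw [M.wAddComm (0, t) g, hr t]

lemma zdirNat (k : ℕ) (r : ℝ) : r ≤ M.w ((k : ℤ), 0) r := by
  induction k with
  | zero => rw [show (((0 : ℕ) : ℤ), (0 : ℝ)) = 0 from rfl, M.act0]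
  | succ k ih =>
    have hp : (((k + 1 : ℕ) : ℤ), (0 : ℝ)) = (1, 0) + ((k : ℤ), 0) := by
      simp [Prod.ext_iff]; ring
    rw [hp, M.actAdd]
    exact le_trans ih (M.zdir _)

lemma zdir' (n : ℤ) (hn : 0 ≤ n) (r : ℝ) : r ≤ M.w (n, 0) r := by
  have h := M.zdirNat n.toNat r
  rwa [Int.toNat_of_nonneg hn] at h

lemma rightInv (g : ℤ × ℝ) (r : ℝ) : M.w g (M.w (-g) r) = r := by
  rw [← M.actAdd, add_neg_cancel, M.act0]

lemma strictMonoMixed (g : ℤ × ℝ) (hg : StrictMono (M.w g)) : StrictMono (M.w (-g)) := by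
  intro a b hab
  by_contra h
  push_neg at h
  have := hg.monotone h
  rw [M.rightInv, M.rightInv] at this
  exact absurd hab (not_lt.2 this)

lemma strictMonoR (t : ℝ) : StrictMono (M.w (0, t)) := by
  have key : ∀ s : ℝ, 0 ≤ s → StrictMono (M.w (0, s)) := by
    intro s hs
    rcases (M.contW (0, s)).strictMono_of_inj (M.injW _) with h | h
    · exact h
    · exfalso
      obtain ⟨z, hz⟩ := M.fixNe'
      have h1 : z < z + 1 := by linarith
      have h2 : M.w (0, s) (z + 1) < M.w (0, s) z := h h1
      rw [hz s] at h2
      have := M.rdir s hs (z + 1)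
      linarith
  rcases le_total 0 t with h | h
  · exact key t h
  · have := M.strictMonoMixed (0, -t) (key (-t) (by linarith))
    simpa using this

lemma strictMonoZ (n : ℤ) : StrictMono (M.w (n, 0)) := by
  have h1 : StrictMono (M.w ((1 : ℤ), (0 : ℝ))) := by
        rcases (M.contW (1, 0)).strictMono_of_inj (M.injW _) with h | h
        · exact h
        · exfalso
          set a : ℝ := 0
          set b : ℝ := max (M.w (1, 0) a) a + 1
          have hab : a < b := by
            have := le_max_right (M.w (1, 0) a) a
            simp only [b]; linarith
          have h2 : M.w (1, 0) b < M.w (1, 0) a := h hab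
          have h3 : b ≤ M.w (1, 0) b := M.zdir b
          have h4 : M.w (1, 0) a ≤ max (M.w (1, 0) a) a := le_max_left _ _
          simp only [b] at h3
          linarith
  have keyN : ∀ k : ℕ, StrictMono (M.w ((k : ℤ), 0)) := by
    intro k
    induction k with
    | zero =>
      intro a b hab
      rw [show (((0 : ℕ) : ℤ), (0 : ℝ)) = 0 from rfl, M.act0, M.act0]
      exact hab
    | succ k ih =>
      have hp : (((k + 1 : ℕ) : ℤ), (0 : ℝ)) = (1, 0) + ((k : ℤ), 0) := by
        simp [Prod.ext_iff]; ring
      intro a b hab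
      rw [hp]
      simp only [M.actAdd]
      exact h1 (ih hab)
  have key : ∀ m : ℤ, 0 ≤ m → StrictMono (M.w (m, 0)) := by
    intro m hm
    have h := keyN m.toNat
    rwa [Int.toNat_of_nonneg hm] at h
  rcases le_total 0 n with h | h
  · exact key n h
  · have := M.strictMonoMixed (-n, 0) (key (-n) (by linarith))
    simpa using this

lemma strictMonoW (g : ℤ × ℝ) : StrictMono (M.w g) := by
  obtain ⟨n, t⟩ := g
  have : ((n : ℤ), t) = ((0 : ℤ), t) + (n, 0) := by simp
  rw [this]
  intro a b hab
  simp only [M.actAdd]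
  exact M.strictMonoR t (M.strictMonoZ n hab)

lemma fixClosed : IsClosed M.fix := by
  have : M.fix = ⋂ t : ℝ, {r : ℝ | M.w (0, t) r = r} := by
    ext r; simp [fix, Set.mem_iInter]
  rw [this]
  exact isClosed_iInter fun t => isClosed_eq (M.contW _) continuous_id

lemma zlt (r : ℝ) : r < M.w (1, 0) r := by
  refine lt_of_le_of_ne (M.zdir r) fun h => ?_
  exact one_ne_zero (M.zfree 1 r h.symm)

lemma zmono {m n : ℤ} (h : m ≤ n) (r : ℝ) : M.w (m, 0) r ≤ M.w (n, 0) r := by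
  have : ((n : ℤ), (0 : ℝ)) = (n - m, 0) + (m, 0) := by simp
  rw [this, M.actAdd]
  exact M.zdir' (n - m) (by linarith) _

lemma zstrict {m n : ℤ} (h : m < n) (r : ℝ) : M.w (m, 0) r < M.w (n, 0) r := by
  have h2 : ((n : ℤ), (0 : ℝ)) = (n - 1, 0) + (1, 0) := by simp
  calc M.w (m, 0) r ≤ M.w (n - 1, 0) r := M.zmono (by omega) r
    _ < M.w (n - 1, 0) (M.w (1, 0) r) := M.strictMonoZ _ (M.zlt r)
    _ = M.w (n, 0) r := by rw [h2, M.actAdd]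

lemma tendstoZTop (r : ℝ) : Tendsto (fun n : ℕ => M.w ((n : ℤ), 0) r) atTop atTop := by
  have hmono : Monotone fun n : ℕ => M.w ((n : ℤ), 0) r := fun a b h =>
    M.zmono (by exact_mod_cast h) r
  rcases tendsto_of_monotone hmono with h | ⟨l, hl⟩
  · exact h
  · exfalso
    have h1 : Tendsto (fun n : ℕ => M.w (((n : ℤ) + 1), 0) r) atTop (𝓝 l) := by
      have := hl.comp (tendsto_add_atTop_nat 1)
      simpa [Function.comp_def] using this
    have h2 : Tendsto (fun n : ℕ => M.w (1, 0) (M.w ((n : ℤ), 0) r)) atTop (𝓝 (M.w (1, 0) l)) :=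
      ((M.contW (1, 0)).tendsto l).comp hl
    have heq : (fun n : ℕ => M.w (1, 0) (M.w ((n : ℤ), 0) r))
        = fun n : ℕ => M.w (((n : ℤ) + 1), 0) r := by
      funext n
      have hp : (((n : ℤ) + 1), (0 : ℝ)) = (1, 0) + ((n : ℤ), 0) := by
        simp [Prod.ext_iff]; ring
      rw [hp, M.actAdd]
    rw [heq] at h2
    have := tendsto_nhds_unique h1 h2
    exact absurd this (ne_of_lt (M.zlt l))

lemma tendstoZBot (r : ℝ) : Tendsto (fun n : ℕ => M.w (-(n : ℤ), 0) r) atTop atBot := by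
  have hanti : Antitone fun n : ℕ => M.w (-(n : ℤ), 0) r := fun a b h =>
    M.zmono (by exact_mod_cast neg_le_neg (Int.ofNat_le.2 h)) r
  rcases tendsto_of_antitone hanti with h | ⟨l, hl⟩
  · exact h
  · exfalso
    have h1 : Tendsto (fun n : ℕ => M.w ((-(n : ℤ) - 1), 0) r) atTop (𝓝 l) := by
      have := hl.comp (tendsto_add_atTop_nat 1)
      have heq : ((fun n : ℕ => M.w (-(n : ℤ), 0) r) ∘ fun n => n + 1)
          = fun n : ℕ => M.w ((-(n : ℤ) - 1), 0) r := by
        funext n; simp [Function.comp]; ring_nf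
      rwa [heq] at this
    have h2 : Tendsto (fun n : ℕ => M.w (-1, 0) (M.w (-(n : ℤ), 0) r)) atTop
        (𝓝 (M.w (-1, 0) l)) := ((M.contW (-1, 0)).tendsto l).comp hl
    have heq : (fun n : ℕ => M.w (-1, 0) (M.w (-(n : ℤ), 0) r))
        = fun n : ℕ => M.w ((-(n : ℤ) - 1), 0) r := by
      funext n
      have hp : ((-(n : ℤ) - 1), (0 : ℝ)) = (-1, 0) + (-(n : ℤ), 0) := by
        simp [Prod.ext_iff]; ring
      rw [hp, M.actAdd]
    rw [heq] at h2
    have hll := tendsto_nhds_unique h1 h2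
    have := M.zlt (M.w (-1, 0) l)
    rw [← M.actAdd] at this
    norm_num [M.act0] at this
    rw [← hll] at this
    rw [show ((0:ℤ),(0:ℝ)) = 0 from rfl, M.act0] at this
    exact lt_irrefl _ this
  
lemma existsZAbove (x r : ℝ) : ∃ n : ℤ, x ≤ M.w (n, 0) r := by
  have := (M.tendstoZTop r).eventually_ge_atTop x
  obtain ⟨n, hn⟩ := this.exists
  exact ⟨n, hn⟩

lemma existsZBelow (x r : ℝ) : ∃ n : ℤ, M.w (n, 0) r ≤ x := by
  have := (M.tendstoZBot r).eventually_le_atBot x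
  obtain ⟨n, hn⟩ := this.exists
  exact ⟨-(n : ℤ), hn⟩

lemma fixAbove (x : ℝ) : ∃ z ∈ M.fix, x < z := by
  obtain ⟨z₀, hz₀⟩ := M.fixNe'
  obtain ⟨n, hn⟩ := M.existsZAbove (x + 1) z₀
  exact ⟨M.w (n, 0) z₀, M.fix_inv hz₀ _, by linarith⟩

lemma fixBelow (x : ℝ) : ∃ z ∈ M.fix, z < x := by
  obtain ⟨z₀, hz₀⟩ := M.fixNe'
  obtain ⟨n, hn⟩ := M.existsZBelow (x - 1) z₀
  exact ⟨M.w (n, 0) z₀, M.fix_inv hz₀ _, by linarith⟩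

lemma timeMono (r : ℝ) : Monotone fun t : ℝ => M.w (0, t) r := by
  intro s t hst
  have hp : ((0 : ℤ), t) = (0, t - s) + (0, s) := by simp [Prod.ext_iff]
  simp only
  rw [hp, M.actAdd]
  exact M.rdir (t - s) (by linarith) _

lemma fix_of_pos_period {x t₀ : ℝ} (h : M.w (0, t₀) x = x) (ht : 0 < t₀) : x ∈ M.fix := by
  have step1 : ∀ s : ℝ, 0 ≤ s → s ≤ t₀ → M.w (0, s) x = x := by
    intro s hs hst
    have h1 : x ≤ M.w (0, s) x := M.rdir s hs x
    have h2 : M.w (0, s) x ≤ M.w (0, t₀) x := M.timeMono x hst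
    rw [h] at h2
    linarith
  have stepNat : ∀ k : ℕ, M.w (0, (k : ℝ) * t₀) x = x := by
    intro k
    induction k with
    | zero => simpa [show ((0:ℤ),(0:ℝ)) = 0 from rfl] using M.act0 x
    | succ k ih =>
      have hp : ((0 : ℤ), ((k : ℝ) + 1) * t₀) = (0, t₀) + (0, (k : ℝ) * t₀) := by
        simp [Prod.ext_iff]; ring
      push_cast
      rw [hp, M.actAdd, ih, h]
  have stepInt : ∀ k : ℤ, M.w (0, (k : ℝ) * t₀) x = x := by
    intro k
    rcases le_or_gt 0 k with hk | hk
    · have := stepNat k.toNat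
      rwa [show ((k.toNat : ℝ)) = (k : ℝ) from by
        exact_mod_cast congrArg (Int.cast : ℤ → ℝ) (Int.toNat_of_nonneg hk)] at this
    · have hpos := stepNat (-k).toNat
      have he : (((-k).toNat : ℝ)) = -(k : ℝ) := by
        have := Int.toNat_of_nonneg (by omega : (0 : ℤ) ≤ -k)
        exact_mod_cast congrArg (fun z : ℤ => (z : ℝ)) this
      rw [he] at hpos
      have hc := congrArg (M.w (0, (k : ℝ) * t₀)) hpos
      rw [← M.actAdd] at hc
      have hp : ((0 : ℤ), (k : ℝ) * t₀) + (0, -(k : ℝ) * t₀) = 0 := by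
        simp [Prod.ext_iff]
      rw [hp, M.act0] at hc
      exact hc.symm
  intro t
  set n : ℤ := ⌊t / t₀⌋ with hn
  have hs0 : 0 ≤ t - (n : ℝ) * t₀ := by
    have := Int.floor_le (t / t₀)
    rw [← hn] at this
    have := mul_le_mul_of_nonneg_right this (le_of_lt ht)
    rw [div_mul_cancel₀ _ (ne_of_gt ht)] at this
    linarith
  have hs1 : t - (n : ℝ) * t₀ ≤ t₀ := by
    have := Int.lt_floor_add_one (t / t₀)
    rw [← hn] at this
    have := mul_le_mul_of_nonneg_right (le_of_lt this) (le_of_lt ht)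
    rw [div_mul_cancel₀ _ (ne_of_gt ht)] at this
    nlinarith
  have hp : ((0 : ℤ), t) = (0, t - (n : ℝ) * t₀) + (0, (n : ℝ) * t₀) := by
    simp [Prod.ext_iff]
  rw [hp, M.actAdd, stepInt n]
  exact step1 _ hs0 hs1

lemma rstrict {r : ℝ} (hr : r ∉ M.fix) : StrictMono fun t : ℝ => M.w (0, t) r := by
  intro s t hst
  rcases lt_or_eq_of_le (M.timeMono r (le_of_lt hst)) with h | h
  · exact h
  · exfalso
    have : M.w (0, t - s) (M.w (0, s) r) = M.w (0, s) r := by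
      rw [← M.actAdd]
      have hp : ((0 : ℤ), t - s) + (0, s) = (0, t) := by simp [Prod.ext_iff]
      rw [hp]
      exact h.symm
    have hfix : M.w (0, s) r ∈ M.fix := M.fix_of_pos_period this (by linarith)
    have : r ∈ M.fix := by
      have := M.fix_inv hfix (-((0, s) : ℤ × ℝ))
      rwa [M.leftInv] at this
    exact hr this

noncomputable def dAbove (r : ℝ) : ℝ := sInf (M.fix ∩ Ici r)

noncomputable def cBelow (r : ℝ) : ℝ := sSup (M.fix ∩ Iic r)

lemma dAbove_spec {r : ℝ} (hr : r ∉ M.fix) :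
    M.dAbove r ∈ M.fix ∧ r < M.dAbove r ∧ ∀ z ∈ M.fix, r < z → M.dAbove r ≤ z := by
  have hne : (M.fix ∩ Ici r).Nonempty := by
    obtain ⟨z, hz, hz'⟩ := M.fixAbove r
    exact ⟨z, hz, le_of_lt hz'⟩
  have hbdd : BddBelow (M.fix ∩ Ici r) := ⟨r, fun x hx => hx.2⟩
  have hcl : IsClosed (M.fix ∩ Ici r) := M.fixClosed.inter isClosed_Ici
  have hmem := hcl.csInf_mem hne hbdd
  refine ⟨hmem.1, lt_of_le_of_ne hmem.2 ?_, fun z hz hz' => csInf_le hbdd ⟨hz, le_of_lt hz'⟩⟩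
  intro h
  exact hr (h ▸ hmem.1)

lemma cBelow_spec {r : ℝ} (hr : r ∉ M.fix) :
    M.cBelow r ∈ M.fix ∧ M.cBelow r < r ∧ ∀ z ∈ M.fix, z < r → z ≤ M.cBelow r := by
  have hne : (M.fix ∩ Iic r).Nonempty := by
    obtain ⟨z, hz, hz'⟩ := M.fixBelow r
    exact ⟨z, hz, le_of_lt hz'⟩
  have hbdd : BddAbove (M.fix ∩ Iic r) := ⟨r, fun x hx => hx.2⟩
  have hcl : IsClosed (M.fix ∩ Iic r) := M.fixClosed.inter isClosed_Iic
  have hmem := hcl.csSup_mem hne hbdd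
  refine ⟨hmem.1, lt_of_le_of_ne hmem.2 ?_, fun z hz hz' => le_csSup hbdd ⟨hz, le_of_lt hz'⟩⟩
  intro h
  exact hr (h.symm ▸ hmem.1)

lemma noFix_Ioo_dAbove {r : ℝ} (hr : r ∉ M.fix) :
    ∀ z ∈ M.fix, ¬ (r < z ∧ z < M.dAbove r) := by
  rintro z hz ⟨h1, h2⟩
  exact absurd ((M.dAbove_spec hr).2.2 z hz h1) (not_le.2 h2)

lemma noFix_Ioo_cBelow {r : ℝ} (hr : r ∉ M.fix) :
    ∀ z ∈ M.fix, ¬ (M.cBelow r < z ∧ z < r) := by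
  rintro z hz ⟨h1, h2⟩
  exact absurd ((M.cBelow_spec hr).2.2 z hz h2) (not_le.2 h1)

lemma dAbove_eq_of {r z : ℝ} (hr : r ∉ M.fix) (hz : z ∈ M.fix) (hrz : r < z)
    (hno : ∀ f ∈ M.fix, ¬ (r < f ∧ f < z)) : M.dAbove r = z := by
  obtain ⟨h1, h2, h3⟩ := M.dAbove_spec hr
  rcases lt_trichotomy (M.dAbove r) z with h | h | h
  · exact absurd ⟨h2, h⟩ (hno _ h1)
  · exact h
  · exact absurd (h3 z hz hrz) (not_le.2 h)

lemma cBelow_eq_of {r z : ℝ} (hr : r ∉ M.fix) (hz : z ∈ M.fix) (hrz : z < r)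
    (hno : ∀ f ∈ M.fix, ¬ (z < f ∧ f < r)) : M.cBelow r = z := by
  obtain ⟨h1, h2, h3⟩ := M.cBelow_spec hr
  rcases lt_trichotomy (M.cBelow r) z with h | h | h
  · exact absurd (h3 z hz hrz) (not_le.2 h)
  · exact h
  · exact absurd ⟨h, h2⟩ (hno _ h1)

lemma orbit_mem_Ioo {r : ℝ} (hr : r ∉ M.fix) (t : ℝ) :
    M.cBelow r < M.w (0, t) r ∧ M.w (0, t) r < M.dAbove r := by
  obtain ⟨hd1, hd2, _⟩ := M.dAbove_spec hr
  obtain ⟨hc1, hc2, _⟩ := M.cBelow_spec hr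
  constructor
  · have := M.strictMonoR t hc2
    rwa [hc1 t] at this
  · have := M.strictMonoR t hd2
    rwa [hd1 t] at this

lemma tendsto_orbit_top {r : ℝ} (hr : r ∉ M.fix) :
    Tendsto (fun t : ℝ => M.w (0, t) r) atTop (𝓝 (M.dAbove r)) := by
  have hmono := M.timeMono r
  have hbdd : BddAbove (range fun t : ℝ => M.w (0, t) r) := by
    refine ⟨M.dAbove r, ?_⟩
    rintro x ⟨t, rfl⟩
    exact le_of_lt (M.orbit_mem_Ioo hr t).2
  have hlim := tendsto_atTop_ciSup hmono hbdd
  set l := ⨆ t : ℝ, M.w (0, t) r with hl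
  have hlfix : l ∈ M.fix := by
    intro s
    have h1 : Tendsto (fun t : ℝ => M.w (0, s) (M.w (0, t) r)) atTop (𝓝 (M.w (0, s) l)) :=
      ((M.contW (0, s)).tendsto l).comp hlim
    have heq : (fun t : ℝ => M.w (0, s) (M.w (0, t) r)) = fun t : ℝ => M.w (0, s + t) r := by
      funext t
      rw [← M.actAdd]
      norm_num
    rw [heq] at h1
    have h2 : Tendsto (fun t : ℝ => M.w (0, s + t) r) atTop (𝓝 l) := by
      have hshift : Tendsto (fun t : ℝ => s + t) atTop atTop := tendsto_atTop_add_const_left _ s tendsto_id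
      exact hlim.comp hshift
    exact tendsto_nhds_unique h1 h2
  have hlge : M.w (0, 1) r ≤ l := le_ciSup hbdd 1
  have hr1 : r < M.w (0, (1:ℝ)) r := by
    have := M.rstrict hr (zero_lt_one : (0:ℝ) < 1)
    simpa [show ((0:ℤ),(0:ℝ)) = 0 from rfl, M.act0] using this
  have hrl : r < l := lt_of_lt_of_le hr1 hlge
  have hld : l ≤ M.dAbove r := by
    refine le_of_tendsto hlim (Eventually.of_forall fun t => ?_)
    exact le_of_lt (M.orbit_mem_Ioo hr t).2
  have : l = M.dAbove r := by
    rcases lt_or_eq_of_le hld with h | h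
    · exact absurd ⟨hrl, h⟩ (M.noFix_Ioo_dAbove hr l hlfix)
    · exact h
  rwa [this] at hlim

lemma tendsto_orbit_bot {r : ℝ} (hr : r ∉ M.fix) :
    Tendsto (fun t : ℝ => M.w (0, t) r) atBot (𝓝 (M.cBelow r)) := by
  have hmono := M.timeMono r
  have hbdd : BddBelow (range fun t : ℝ => M.w (0, t) r) := by
    refine ⟨M.cBelow r, ?_⟩
    rintro x ⟨t, rfl⟩
    exact le_of_lt (M.orbit_mem_Ioo hr t).1
  have hlim := tendsto_atBot_ciInf hmono hbdd
  set l := ⨅ t : ℝ, M.w (0, t) r with hl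
  have hlfix : l ∈ M.fix := by
    intro s
    have h1 : Tendsto (fun t : ℝ => M.w (0, s) (M.w (0, t) r)) atBot (𝓝 (M.w (0, s) l)) :=
      ((M.contW (0, s)).tendsto l).comp hlim
    have heq : (fun t : ℝ => M.w (0, s) (M.w (0, t) r)) = fun t : ℝ => M.w (0, s + t) r := by
      funext t
      rw [← M.actAdd]
      norm_num
    rw [heq] at h1
    have h2 : Tendsto (fun t : ℝ => M.w (0, s + t) r) atBot (𝓝 l) := by
      have hshift : Tendsto (fun t : ℝ => s + t) atBot atBot := tendsto_atBot_add_const_left _ s tendsto_id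
      exact hlim.comp hshift
    exact tendsto_nhds_unique h1 h2
  have hlge : l ≤ M.w (0, -1) r := ciInf_le hbdd (-1)
  have hr1 : M.w (0, (-1:ℝ)) r < r := by
    have := M.rstrict hr (show (-1:ℝ) < (0:ℝ) by norm_num)
    simpa [show ((0:ℤ),(0:ℝ)) = 0 from rfl, M.act0] using this
  have hrl : l < r := lt_of_le_of_lt hlge hr1
  have hld : M.cBelow r ≤ l := by
    refine ge_of_tendsto hlim (Eventually.of_forall fun t => ?_)
    exact le_of_lt (M.orbit_mem_Ioo hr t).1
  have : l = M.cBelow r := by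
    rcases lt_or_eq_of_le hld with h | h
    · exact absurd ⟨h, hrl⟩ (M.noFix_Ioo_cBelow hr l hlfix)
    · exact h.symm
  rwa [this] at hlim

lemma orbit_surj {r y : ℝ} (hr : r ∉ M.fix) (h1 : M.cBelow r < y) (h2 : y < M.dAbove r) :
    ∃ t : ℝ, M.w (0, t) r = y := by
  obtain ⟨t₁, ht₁⟩ := ((M.tendsto_orbit_bot hr).eventually (eventually_lt_nhds h1)).exists
  obtain ⟨t₂, ht₂⟩ := ((M.tendsto_orbit_top hr).eventually (eventually_gt_nhds h2)).exists
  have ht : t₁ ≤ t₂ := by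
    by_contra h
    push_neg at h
    have := M.timeMono r (le_of_lt h)
    linarith
  have hy : y ∈ Icc (M.w (0, t₁) r) (M.w (0, t₂) r) := ⟨le_of_lt ht₁, le_of_lt ht₂⟩
  have := intermediate_value_Icc ht (M.contT r).continuousOn hy
  obtain ⟨t, _, ht⟩ := this
  exact ⟨t, ht⟩

lemma orbit_notFix {r : ℝ} (hr : r ∉ M.fix) (t : ℝ) : M.w (0, t) r ∉ M.fix := by
  intro h
  have := M.fix_inv h (-((0, t) : ℤ × ℝ))
  rw [M.leftInv] at this
  exact hr this

lemma noFix_comp {r f : ℝ} (hr : r ∉ M.fix) (hf : f ∈ M.fix)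
    (h1 : M.cBelow r < f) (h2 : f < M.dAbove r) : False := by
  rcases lt_trichotomy f r with h | h | h
  · exact M.noFix_Ioo_cBelow hr f hf ⟨h1, h⟩
  · exact hr (h ▸ hf)
  · exact M.noFix_Ioo_dAbove hr f hf ⟨h, h2⟩

lemma sameComp {r r' : ℝ} (hr : r ∉ M.fix) (hr' : r' ∉ M.fix)
    (h1 : M.cBelow r < r') (h2 : r' < M.dAbove r) :
    M.dAbove r' = M.dAbove r ∧ M.cBelow r' = M.cBelow r := by
  constructor
  · refine M.dAbove_eq_of hr' (M.dAbove_spec hr).1 h2 fun f hf hff => ?_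
    exact M.noFix_comp hr hf (lt_trans h1 hff.1) hff.2
  · refine M.cBelow_eq_of hr' (M.cBelow_spec hr).1 h1 fun f hf hff => ?_
    exact M.noFix_comp hr hf hff.1 (lt_trans hff.2 h2)

lemma isolated {z : ℝ} (hz : z ∈ M.fix) : ∃ ε > 0, ∀ f ∈ M.fix, |f - z| < ε → f = z := by
  haveI := M.discr'
  have : IsOpen {(⟨z, hz⟩ : M.fix)} := isOpen_discrete _
  obtain ⟨V, hV, hVz⟩ := isOpen_induced_iff.mp this
  have hzV : z ∈ V := by
    have : (⟨z, hz⟩ : M.fix) ∈ Subtype.val ⁻¹' V := by rw [hVz]; rfl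
    exact this
  obtain ⟨ε, hε, hball⟩ := Metric.isOpen_iff.mp hV z hzV
  refine ⟨ε, hε, fun f hf hfz => ?_⟩
  have : f ∈ V := hball (by simpa [Real.dist_eq] using hfz)
  have : (⟨f, hf⟩ : M.fix) ∈ Subtype.val ⁻¹' V := this
  rw [hVz] at this
  exact congrArg Subtype.val (Set.mem_singleton_iff.mp this)

lemma exists_notFix_Ioo {x y : ℝ} (hxy : x < y) : ∃ r, r ∈ Ioo x y ∧ r ∉ M.fix := by
  by_contra h
  push_neg at h
  set z := (x + y) / 2 with hzdef
  have hz : z ∈ Ioo x y := ⟨by simp only [hzdef]; linarith, by simp only [hzdef]; linarith⟩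
  have hzfix : z ∈ M.fix := h z hz
  obtain ⟨ε, hε, hiso⟩ := M.isolated hzfix
  set z' := z + min ε (y - z) / 2 with hz'def
  have hz'1 : z < z' := by
    have : 0 < min ε (y - z) := lt_min hε (by simp only [hzdef]; linarith)
    simp only [hz'def]; linarith
  have hz'2 : z' < y := by
    have : min ε (y - z) ≤ y - z := min_le_right _ _
    have h2 : 0 < y - z := by simp only [hzdef]; linarith
    simp only [hz'def]; linarith
  have hz'fix : z' ∈ M.fix := h z' ⟨lt_trans hz.1 hz'1, hz'2⟩
  have : |z' - z| < ε := by
    have : min ε (y - z) ≤ ε := min_le_left _ _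
    have h0 : 0 < min ε (y - z) := lt_min hε (by simp only [hzdef]; linarith)
    rw [abs_of_pos (by simp only [hz'def]; linarith)]
    simp only [hz'def]
    linarith
  exact absurd (hiso z' hz'fix this) (ne_of_gt hz'1)

lemma exists_attached_below {z : ℝ} (hz : z ∈ M.fix) :
    ∃ r, r ∉ M.fix ∧ r < z ∧ M.dAbove r = z := by
  obtain ⟨ε, hε, hiso⟩ := M.isolated hz
  set r := z - ε / 2 with hrdef
  have hrz : r < z := by simp only [hrdef]; linarith
  have hnear : ∀ f ∈ M.fix, r ≤ f → f ≤ z → f = z := by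
    intro f hf h1 h2
    exact hiso f hf (by rw [abs_of_nonpos (by linarith)]; simp only [hrdef] at h1; linarith)
  have hr : r ∉ M.fix := fun hrf => absurd (hnear r hrf le_rfl (le_of_lt hrz)) (ne_of_lt hrz)
  refine ⟨r, hr, hrz, M.dAbove_eq_of hr hz hrz fun f hf ⟨h1, h2⟩ => ?_⟩
  exact absurd (hnear f hf (le_of_lt h1) (le_of_lt h2)) (ne_of_lt h2)

lemma exists_attached_above {z : ℝ} (hz : z ∈ M.fix) :
    ∃ r, r ∉ M.fix ∧ z < r ∧ M.cBelow r = z := by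
  obtain ⟨ε, hε, hiso⟩ := M.isolated hz
  set r := z + ε / 2 with hrdef
  have hrz : z < r := by simp only [hrdef]; linarith
  have hnear : ∀ f ∈ M.fix, z ≤ f → f ≤ r → f = z := by
    intro f hf h1 h2
    exact hiso f hf (by rw [abs_of_nonneg (by linarith)]; simp only [hrdef] at h2; linarith)
  have hr : r ∉ M.fix := fun hrf => absurd (hnear r hrf (le_of_lt hrz) le_rfl) (ne_of_gt hrz)
  refine ⟨r, hr, hrz, M.cBelow_eq_of hr hz hrz fun f hf ⟨h1, h2⟩ => ?_⟩
  exact absurd (hnear f hf (le_of_lt h1) (le_of_lt h2)) (ne_of_gt h1)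

lemma fix_finite_Icc (x y : ℝ) : (M.fix ∩ Icc x y).Finite := by
  haveI := M.discr'
  have hcomp : IsCompact (M.fix ∩ Icc x y) :=
    (isCompact_Icc.inter_left M.fixClosed)
  haveI : DiscreteTopology (M.fix ∩ Icc x y : Set ℝ) := by
    have hsub : (M.fix ∩ Icc x y : Set ℝ) ⊆ M.fix := inter_subset_left
    exact DiscreteTopology.of_subset M.discr' hsub
  exact hcomp.finite ⟨inferInstance⟩

lemma act0' (r : ℝ) : M.w ((0 : ℤ), (0 : ℝ)) r = r := by
  rw [show ((0:ℤ),(0:ℝ)) = 0 from rfl, M.act0]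

lemma time_pos_of_gt {r : ℝ} (hr : r ∉ M.fix) {t : ℝ} (h : r < M.w (0, t) r) : 0 < t := by
  have hs := M.rstrict hr
  have h0 : (fun s : ℝ => M.w (0, s) r) 0 < (fun s : ℝ => M.w (0, s) r) t := by
    simpa [M.act0', M.act0] using h
  exact hs.lt_iff_lt.mp h0

end RModel

theorem key {I : Type*} (M N : RModel) (g : ℝ → ℝ) (hg : Continuous g)
    (p : I → ℝ) (q : I → ℝ)
    (hp : ∀ i, p i ∉ M.fix) (hq : ∀ i, q i ∉ N.fix)
    (hsurjM : ∀ r ∉ M.fix, ∃ i t, M.w (0, t) (p i) = r)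
    (hsurjN : ∀ r ∉ N.fix, ∃ i t, N.w (0, t) (q i) = r)
    (heqv : ∀ (t r : ℝ), g (M.w (0, t) r) = N.w (0, t) (g r))
    (hpq : ∀ i, g (p i) = q i) :
    StrictMono g ∧ Function.Surjective g := by
  -- orbit images
  have gOrbit : ∀ i (t : ℝ), g (M.w (0, t) (p i)) = N.w (0, t) (q i) := fun i t => by
    rw [heqv, hpq]
  -- endpoint images
  have gd : ∀ i, g (M.dAbove (p i)) = N.dAbove (q i) := by
    intro i
    have h1 := M.tendsto_orbit_top (hp i)
    have h2 : Tendsto (fun t : ℝ => g (M.w (0, t) (p i))) atTop (𝓝 (g (M.dAbove (p i)))) :=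
      ((hg.tendsto _)).comp h1
    have h3 : (fun t : ℝ => g (M.w (0, t) (p i))) = fun t : ℝ => N.w (0, t) (q i) :=
      funext fun t => gOrbit i t
    rw [h3] at h2
    exact tendsto_nhds_unique h2 (N.tendsto_orbit_top (hq i))
  have gc : ∀ i, g (M.cBelow (p i)) = N.cBelow (q i) := by
    intro i
    have h1 := M.tendsto_orbit_bot (hp i)
    have h2 : Tendsto (fun t : ℝ => g (M.w (0, t) (p i))) atBot (𝓝 (g (M.cBelow (p i)))) :=
      ((hg.tendsto _)).comp h1
    have h3 : (fun t : ℝ => g (M.w (0, t) (p i))) = fun t : ℝ => N.w (0, t) (q i) :=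
      funext fun t => gOrbit i t
    rw [h3] at h2
    exact tendsto_nhds_unique h2 (N.tendsto_orbit_bot (hq i))
  -- interior values
  have ginter : ∀ i x, M.cBelow (p i) < x → x < M.dAbove (p i) →
      (N.cBelow (q i) < g x ∧ g x < N.dAbove (q i)) ∧ ∃ t, M.w (0, t) (p i) = x := by
    intro i x h1 h2
    obtain ⟨t, ht⟩ := M.orbit_surj (hp i) h1 h2
    have := N.orbit_mem_Ioo (hq i) t
    rw [← ht, gOrbit i t]
    exact ⟨this, t, rfl⟩
  -- monotone on a closed component
  have monoComp : ∀ i, MonotoneOn g (Icc (M.cBelow (p i)) (M.dAbove (p i))) := by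
    intro i x hx y hy hxy
    rcases eq_or_lt_of_le hxy with rfl | hlt
    · exact le_rfl
    have hcd' : N.cBelow (q i) < N.dAbove (q i) :=
      lt_trans (N.cBelow_spec (hq i)).2.1 (N.dAbove_spec (hq i)).2.1
    rcases eq_or_lt_of_le hx.1 with hxc | hxc
    · -- x is the bottom endpoint
      rw [← hxc, gc i]
      rcases eq_or_lt_of_le hy.2 with rfl | hyd
      · rw [gd i]; exact le_of_lt hcd'
      · have hlt' : M.cBelow (p i) < y := by rw [hxc]; exact hlt
        exact le_of_lt (ginter i y hlt' hyd).1.1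
    · -- x interior (x < d since x < y ≤ d)
      have hxd : x < M.dAbove (p i) := lt_of_lt_of_le hlt hy.2
      obtain ⟨⟨hgx1, hgx2⟩, t, htx⟩ := ginter i x hxc hxd
      rcases eq_or_lt_of_le hy.2 with rfl | hyd
      · rw [gd i]; exact le_of_lt hgx2
      · obtain ⟨⟨hgy1, hgy2⟩, s, hsy⟩ := ginter i y (lt_trans hxc hlt) hyd
        have hts : t < s := by
          have : M.w (0, t) (p i) < M.w (0, s) (p i) := by rw [htx, hsy]; exact hlt
          exact (M.rstrict (hp i)).lt_iff_lt.mp this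
        rw [← htx, ← hsy, gOrbit i t, gOrbit i s]
        exact le_of_lt (N.rstrict (hq i) hts)
  -- every nonfixed point's component is a section component
  have compSec : ∀ r ∉ M.fix, ∃ i, M.cBelow (p i) = M.cBelow r ∧ M.dAbove (p i) = M.dAbove r := by
    intro r hr
    obtain ⟨i, t, ht⟩ := hsurjM r hr
    have hmem := M.orbit_mem_Ioo (hp i) t
    rw [ht] at hmem
    have := M.sameComp (hp i) hr hmem.1 hmem.2
    exact ⟨i, this.2.symm, this.1.symm⟩
  -- monotone on fixed-free segments
  have gseg : ∀ x y : ℝ, x < y → (∀ f ∈ M.fix, f ∉ Ioo x y) → g x ≤ g y := by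
    intro x y hxy hno
    obtain ⟨r, hrmem, hr⟩ := M.exists_notFix_Ioo hxy
    have hcx : M.cBelow r ≤ x := by
      by_contra h
      push_neg at h
      exact hno _ (M.cBelow_spec hr).1 ⟨h, lt_trans (M.cBelow_spec hr).2.1 hrmem.2⟩
    have hdy : y ≤ M.dAbove r := by
      by_contra h
      push_neg at h
      exact hno _ (M.dAbove_spec hr).1 ⟨lt_trans hrmem.1 (M.dAbove_spec hr).2.1, h⟩
    obtain ⟨i, hic, hid⟩ := compSec r hr
    have hx : x ∈ Icc (M.cBelow (p i)) (M.dAbove (p i)) := by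
      rw [hic, hid]
      exact ⟨hcx, le_trans (le_of_lt hxy) hdy⟩
    have hy : y ∈ Icc (M.cBelow (p i)) (M.dAbove (p i)) := by
      rw [hic, hid]
      exact ⟨le_trans hcx (le_of_lt hxy), hdy⟩
    exact monoComp i hx hy (le_of_lt hxy)
  -- global monotonicity by induction on the number of fixed points in between
  have main : ∀ n : ℕ, ∀ x y : ℝ, x < y → (M.fix ∩ Ioo x y).ncard ≤ n → g x ≤ g y := by
    intro n
    induction n with
    | zero =>
      intro x y hxy hcard
      have hfin : (M.fix ∩ Ioo x y).Finite :=
        (M.fix_finite_Icc x y).subset (inter_subset_inter_right _ Ioo_subset_Icc_self)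
      have hempty : (M.fix ∩ Ioo x y) = ∅ := by
        rw [← Set.ncard_eq_zero hfin]
        omega
      refine gseg x y hxy fun f hf hfm => ?_
      have : f ∈ M.fix ∩ Ioo x y := ⟨hf, hfm⟩
      rw [hempty] at this
      exact this
    | succ n ih =>
      intro x y hxy hcard
      rcases Set.eq_empty_or_nonempty (M.fix ∩ Ioo x y) with hempty | hne
      · refine gseg x y hxy fun f hf hfm => ?_
        have : f ∈ M.fix ∩ Ioo x y := ⟨hf, hfm⟩
        rw [hempty] at this
        exact this
      · obtain ⟨z, hzf, hzm⟩ := hne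
        have hfin : (M.fix ∩ Ioo x y).Finite :=
          (M.fix_finite_Icc x y).subset (inter_subset_inter_right _ Ioo_subset_Icc_self)
        have hsub1 : (M.fix ∩ Ioo x z) ⊆ (M.fix ∩ Ioo x y) \ {z} := by
          rintro f ⟨hf, hf1, hf2⟩
          exact ⟨⟨hf, hf1, lt_trans hf2 hzm.2⟩, fun h => absurd (h ▸ hf2) (lt_irrefl z)⟩
        have hsub2 : (M.fix ∩ Ioo z y) ⊆ (M.fix ∩ Ioo x y) \ {z} := by
          rintro f ⟨hf, hf1, hf2⟩
          exact ⟨⟨hf, lt_trans hzm.1 hf1, hf2⟩, fun h => absurd (h ▸ hf1) (lt_irrefl z)⟩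
        have hzmem : z ∈ M.fix ∩ Ioo x y := ⟨hzf, hzm⟩
        have hcard' : ((M.fix ∩ Ioo x y) \ {z}).ncard ≤ n := by
          have := Set.ncard_diff_singleton_lt_of_mem hzmem hfin
          omega
        have h1 : g x ≤ g z := ih x z hzm.1
          (le_trans (Set.ncard_le_ncard hsub1 hfin.diff) hcard')
        have h2 : g z ≤ g y := ih z y hzm.2
          (le_trans (Set.ncard_le_ncard hsub2 hfin.diff) hcard')
        exact le_trans h1 h2
  have hmono : Monotone g := by
    intro x y hxy
    rcases eq_or_lt_of_le hxy with rfl | hlt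
    · exact le_rfl
    · exact main (M.fix ∩ Ioo x y).ncard x y hlt le_rfl
  -- strict monotonicity
  have hstrict : StrictMono g := by
    intro x y hxy
    rcases lt_or_eq_of_le (hmono (le_of_lt hxy)) with h | h
    · exact h
    exfalso
    obtain ⟨r, hrmem, hr⟩ := M.exists_notFix_Ioo hxy
    have hgr : g r ∉ N.fix := by
      obtain ⟨i, t, ht⟩ := hsurjM r hr
      rw [← ht, gOrbit i t]
      exact N.orbit_notFix (hq i) t
    set r2 := min y (M.dAbove r) with hr2def
    have h1r : r < r2 := lt_min hrmem.2 (M.dAbove_spec hr).2.1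
    have hrr2 : r < (r + r2) / 2 ∧ (r + r2) / 2 < r2 := ⟨by linarith, by linarith⟩
    set m := (r + r2) / 2 with hmdef
    have hm1 : r < m := hrr2.1
    have hm2 : m < y := lt_of_lt_of_le hrr2.2 (min_le_left _ _)
    have hm3 : m < M.dAbove r := lt_of_lt_of_le hrr2.2 (min_le_right _ _)
    obtain ⟨t, htm⟩ := M.orbit_surj hr (lt_trans (M.cBelow_spec hr).2.1 hm1) hm3
    have htpos : 0 < t := M.time_pos_of_gt hr (htm ▸ hm1)
    have hgm : g r < g m := by
      rw [← htm, heqv]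
      have := N.rstrict hgr htpos
      simpa [N.act0', N.act0] using this
    have hxr : g x ≤ g r := hmono (le_of_lt hrmem.1)
    have hmy : g m ≤ g y := hmono (le_of_lt hm2)
    rw [← h] at hmy
    linarith
  refine ⟨hstrict, fun y' => ?_⟩
  by_cases hy' : y' ∈ N.fix
  · obtain ⟨r', hr', hr'lt, hr'd⟩ := N.exists_attached_below hy'
    obtain ⟨i, t, ht⟩ := hsurjN r' hr'
    have hmem := N.orbit_mem_Ioo (hq i) t
    rw [ht] at hmem
    have hsame := N.sameComp (hq i) hr' hmem.1 hmem.2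
    refine ⟨M.dAbove (p i), ?_⟩
    rw [gd i, ← hsame.1, hr'd]
  · obtain ⟨i, t, ht⟩ := hsurjN y' hy'
    refine ⟨M.w (0, t) (p i), ?_⟩
    rw [gOrbit i t, ht]

end BPAux

namespace BPAux

open Set Filter Function

section FiberModel

variable {S E : Type*} [TopologicalSpace S] [TopologicalSpace E]

/-- Chosen order homeomorphism of a fiber with `ℝ`. -/
noncomputable def fiberHomeo (F : PreFamily S E) (hQ1 : F.Q1) (s : S) :
    {x : E // F.π x = s} ≃ₜ ℝ := ((hQ1 s).exists_homeo).choose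

lemma fiberHomeo_le (F : PreFamily S E) (hQ1 : F.Q1) (s : S) :
    ∀ x y, (F.fiberData s).le x y ↔ fiberHomeo F hQ1 s x ≤ fiberHomeo F hQ1 s y :=
  ((hQ1 s).exists_homeo).choose_spec

/-- The `ℝ`-model of a fiber. -/
noncomputable def fiberModel (F : PreFamily S E) (hQ1 : F.Q1) (s : S) : RModel where
  w g r := fiberHomeo F hQ1 s ((F.fiberData s).act g ((fiberHomeo F hQ1 s).symm r))
  act0 r := by rw [(hQ1 s).act_zero, Homeomorph.apply_symm_apply]
  actAdd g h r := by rw [(hQ1 s).act_add, Homeomorph.symm_apply_apply]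
  cont := by
    refine (fiberHomeo F hQ1 s).continuous.comp ?_
    exact (hQ1 s).act_cont.comp
      (continuous_fst.prodMk ((fiberHomeo F hQ1 s).symm.continuous.comp continuous_snd))
  zfree n r h := by
    refine (hQ1 s).z_free n ((fiberHomeo F hQ1 s).symm r) ?_
    have := congrArg (fiberHomeo F hQ1 s).symm h
    rwa [Homeomorph.symm_apply_apply] at this
  rdir t ht r := by
    have := (hQ1 s).r_directed t ht ((fiberHomeo F hQ1 s).symm r)
    rw [fiberHomeo_le F hQ1 s] at this
    rwa [Homeomorph.apply_symm_apply] at this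
  zdir r := by
    have := (hQ1 s).z_directed ((fiberHomeo F hQ1 s).symm r)
    rw [fiberHomeo_le F hQ1 s] at this
    rwa [Homeomorph.apply_symm_apply] at this
  discr := by
    have hkey : {r : ℝ | ∀ t : ℝ,
        fiberHomeo F hQ1 s ((F.fiberData s).act (0, t) ((fiberHomeo F hQ1 s).symm r)) = r}
        = (fiberHomeo F hQ1 s).symm ⁻¹' (F.fiberData s).rFixed := by
      ext r
      simp only [mem_setOf_eq, mem_preimage, ParaData.rFixed]
      constructor
      · intro h t
        have := congrArg (fiberHomeo F hQ1 s).symm (h t)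
        rwa [Homeomorph.symm_apply_apply] at this
      · intro h t
        rw [h t, Homeomorph.apply_symm_apply]
    rw [hkey]
    haveI := (hQ1 s).fixed_discrete
    have hemb : Topology.IsEmbedding
        (fun r : ((fiberHomeo F hQ1 s).symm ⁻¹' (F.fiberData s).rFixed : Set ℝ) =>
          (⟨(fiberHomeo F hQ1 s).symm r.1, r.2⟩ : (F.fiberData s).rFixed)) := by
      refine Topology.IsEmbedding.codRestrict ?_ _ _
      exact (fiberHomeo F hQ1 s).symm.isEmbedding.comp Topology.IsEmbedding.subtypeVal
    exact hemb.discreteTopology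
  fixNe := by
    obtain ⟨x, hx⟩ := (hQ1 s).fixed_nonempty
    refine ⟨fiberHomeo F hQ1 s x, fun t => ?_⟩
    rw [Homeomorph.symm_apply_apply, hx t]

variable (F : PreFamily S E) (hQ1 : F.Q1)

/-- Strict fiberwise inequality. -/
def fslt (x y : E) : Prop := F.fle x y ∧ ¬ F.fle y x

lemma fslt_iff_ne {x y : E} (hxy : F.π x = F.π y) :
    fslt F x y ↔ F.fle x y ∧ x ≠ y := by
  constructor
  · rintro ⟨h1, h2⟩
    exact ⟨h1, fun h => h2 (h ▸ F.fle_refl x)⟩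
  · rintro ⟨h1, h2⟩
    refine ⟨h1, fun h => h2 (F.fle_antisymm _ _ h1 h)⟩

lemma fslt_trans_le {x y z : E} (h1 : fslt F x y) (h2 : F.fle y z) : fslt F x z := by
  refine ⟨F.fle_trans _ _ _ h1.1 h2, fun h => h1.2 (F.fle_trans _ _ _ h2 h)⟩

lemma fle_trans_slt {x y z : E} (h1 : F.fle x y) (h2 : fslt F y z) : fslt F x z := by
  refine ⟨F.fle_trans _ _ _ h1 h2.1, fun h => h2.2 (F.fle_trans _ _ _ h h1)⟩

-- coordinate dictionary
lemma d_le {s : S} {x y : E} (hx : F.π x = s) (hy : F.π y = s) :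
    F.fle x y ↔ fiberHomeo F hQ1 s ⟨x, hx⟩ ≤ fiberHomeo F hQ1 s ⟨y, hy⟩ :=
  fiberHomeo_le F hQ1 s ⟨x, hx⟩ ⟨y, hy⟩

lemma d_slt {s : S} {x y : E} (hx : F.π x = s) (hy : F.π y = s) :
    fslt F x y ↔ fiberHomeo F hQ1 s ⟨x, hx⟩ < fiberHomeo F hQ1 s ⟨y, hy⟩ := by
  rw [fslt, d_le F hQ1 hx hy, d_le F hQ1 hy hx]
  exact ⟨fun ⟨h1, h2⟩ => lt_of_le_not_ge h1 h2, fun h => ⟨le_of_lt h, not_le.2 h⟩⟩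

lemma d_act {s : S} {x : E} (hx : F.π x = s) (g : ℤ × ℝ) :
    fiberHomeo F hQ1 s ⟨F.act g x, by rw [F.act_fiber]; exact hx⟩
      = (fiberModel F hQ1 s).w g (fiberHomeo F hQ1 s ⟨x, hx⟩) := by
  show _ = fiberHomeo F hQ1 s ((F.fiberData s).act g ((fiberHomeo F hQ1 s).symm
    (fiberHomeo F hQ1 s ⟨x, hx⟩)))
  rw [Homeomorph.symm_apply_apply]
  rfl

lemma d_fix {s : S} {x : E} (hx : F.π x = s) :
    x ∈ F.rFixed ↔ fiberHomeo F hQ1 s ⟨x, hx⟩ ∈ (fiberModel F hQ1 s).fix := by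
  simp only [PreFamily.rFixed, mem_setOf_eq, RModel.fix, fiberModel,
    Homeomorph.symm_apply_apply]
  constructor
  · intro h t
    have hval : (F.fiberData s).act (0, t) ⟨x, hx⟩ = ⟨x, hx⟩ := Subtype.ext (h t)
    rw [hval]
  · intro h t
    have := congrArg (fiberHomeo F hQ1 s).symm (h t)
    simp only [Homeomorph.symm_apply_apply] at this
    exact congrArg Subtype.val this

lemma d_symm_fix {s : S} {r : ℝ} :
    ((fiberHomeo F hQ1 s).symm r).1 ∈ F.rFixed ↔ r ∈ (fiberModel F hQ1 s).fix := by
  have h := d_fix F hQ1 (s := s) (x := ((fiberHomeo F hQ1 s).symm r).1)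
    ((fiberHomeo F hQ1 s).symm r).2
  rw [h]
  have : (⟨((fiberHomeo F hQ1 s).symm r).1, ((fiberHomeo F hQ1 s).symm r).2⟩ :
      {x : E // F.π x = s}) = (fiberHomeo F hQ1 s).symm r := Subtype.ext rfl
  rw [this, Homeomorph.apply_symm_apply]

-- fiber-level consequences
include hQ1 in
lemma cofin_up {x y : E} (h : F.π x = F.π y) : ∃ n : ℤ, F.fle x (F.act (n, 0) y) := by
  set s := F.π y with hs
  obtain ⟨n, hn⟩ := (fiberModel F hQ1 s).existsZAbove (fiberHomeo F hQ1 s ⟨x, h⟩)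
    (fiberHomeo F hQ1 s ⟨y, rfl⟩)
  refine ⟨n, ?_⟩
  rw [d_le F hQ1 h (by rw [F.act_fiber] : F.π (F.act (n,0) y) = s), d_act F hQ1 rfl]
  exact hn

include hQ1 in
lemma cofin_dn {x y : E} (h : F.π x = F.π y) : ∃ n : ℤ, F.fle (F.act (n, 0) y) x := by
  set s := F.π y with hs
  obtain ⟨n, hn⟩ := (fiberModel F hQ1 s).existsZBelow (fiberHomeo F hQ1 s ⟨x, h⟩)
    (fiberHomeo F hQ1 s ⟨y, rfl⟩)
  refine ⟨n, ?_⟩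
  rw [d_le F hQ1 (by rw [F.act_fiber] : F.π (F.act (n,0) y) = s) h, d_act F hQ1 rfl]
  exact hn

include hQ1 in
lemma act_mono {x y : E} (h : F.π x = F.π y) (g : ℤ × ℝ) (hle : F.fle x y) :
    F.fle (F.act g x) (F.act g y) := by
  set s := F.π y with hs
  rw [d_le F hQ1 (h : F.π x = s) rfl] at hle
  rw [d_le F hQ1 (by rw [F.act_fiber]; exact h : F.π (F.act g x) = s)
    (by rw [F.act_fiber] : F.π (F.act g y) = s), d_act F hQ1 (h : F.π x = s),
    d_act F hQ1 rfl]
  exact ((fiberModel F hQ1 s).strictMonoW g).monotone hle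

include hQ1 in
lemma act_slt {x y : E} (h : F.π x = F.π y) (g : ℤ × ℝ) (hle : fslt F x y) :
    fslt F (F.act g x) (F.act g y) := by
  set s := F.π y with hs
  rw [d_slt F hQ1 (h : F.π x = s) rfl] at hle
  rw [d_slt F hQ1 (by rw [F.act_fiber]; exact h : F.π (F.act g x) = s)
    (by rw [F.act_fiber] : F.π (F.act g y) = s), d_act F hQ1 (h : F.π x = s),
    d_act F hQ1 rfl]
  exact (fiberModel F hQ1 s).strictMonoW g hle

include hQ1 in
lemma self_mono (x : E) {j k : ℤ} (hjk : j ≤ k) : F.fle (F.act (j, 0) x) (F.act (k, 0) x) := by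
  set s := F.π x with hs
  rw [d_le F hQ1 (by rw [F.act_fiber] : F.π (F.act (j,0) x) = s)
    (by rw [F.act_fiber] : F.π (F.act (k,0) x) = s), d_act F hQ1 rfl, d_act F hQ1 rfl]
  exact (fiberModel F hQ1 s).zmono hjk _

end FiberModel

end BPAux



namespace BPAux

open Set Filter Function

section Part4

variable {S E : Type*} [TopologicalSpace S] [TopologicalSpace E]
variable (F : PreFamily S E) (hQ1 : F.Q1)

lemma d_coord (s : S) (r : ℝ) :
    fiberHomeo F hQ1 s ⟨((fiberHomeo F hQ1 s).symm r).1, ((fiberHomeo F hQ1 s).symm r).2⟩ = r := by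
  have : (⟨((fiberHomeo F hQ1 s).symm r).1, ((fiberHomeo F hQ1 s).symm r).2⟩ :
      {x : E // F.π x = s}) = (fiberHomeo F hQ1 s).symm r := Subtype.ext rfl
  rw [this, Homeomorph.apply_symm_apply]

lemma act_act (g h : ℤ × ℝ) (x : E) : F.act g (F.act h x) = F.act (g + h) x :=
  (F.act_add g h x).symm

lemma act_cancel (g : ℤ × ℝ) (x : E) : F.act (-g) (F.act g x) = x := by
  rw [act_act, neg_add_cancel, F.act_zero]

include hQ1 in
lemma self_strict (x : E) {j k : ℤ} (hjk : j < k) : fslt F (F.act (j, 0) x) (F.act (k, 0) x) := by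
  set s := F.π x with hs
  rw [d_slt F hQ1 (by rw [F.act_fiber] : F.π (F.act (j,0) x) = s)
    (by rw [F.act_fiber] : F.π (F.act (k,0) x) = s), d_act F hQ1 rfl, d_act F hQ1 rfl]
  exact (fiberModel F hQ1 s).zstrict hjk _

include hQ1 in
lemma interval_basis {x : E} {W : Set E} (hW : IsOpen W) (hxW : x ∈ W) :
    ∃ a b : E, F.π a = F.π x ∧ F.π b = F.π x ∧ a ∉ F.rFixed ∧ b ∉ F.rFixed ∧
      fslt F a x ∧ fslt F x b ∧ fslt F (F.act (-1, 0) b) a ∧ fslt F (F.act (-1, 0) x) a ∧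
      (∀ z, F.π z = F.π x → F.fle a z → F.fle z b → z ∈ W) := by
  set s := F.π x with hs
  set φ := fiberHomeo F hQ1 s with hφ
  set M := fiberModel F hQ1 s with hM
  set ξ := φ ⟨x, rfl⟩ with hξ
  have hWf : IsOpen (φ.symm ⁻¹' (Subtype.val ⁻¹' W)) :=
    (hW.preimage continuous_subtype_val).preimage φ.symm.continuous
  have hmem : ξ ∈ φ.symm ⁻¹' (Subtype.val ⁻¹' W) := by
    simp only [mem_preimage, hξ, Homeomorph.symm_apply_apply]
    exact hxW
  obtain ⟨ε, hε, hball⟩ := Metric.isOpen_iff.mp hWf ξ hmem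
  have hw1 : ξ < M.w (1, 0) ξ := M.zlt ξ
  obtain ⟨b', hb'mem, hb'fix⟩ := M.exists_notFix_Ioo
    (x := ξ) (y := min (ξ + ε / 2) (M.w (1, 0) ξ)) (lt_min (by linarith) hw1)
  have hwm1 : M.w (-1, 0) ξ < ξ := by
    have := M.zstrict (show (-1 : ℤ) < 0 by norm_num) ξ
    rwa [show (((0 : ℤ), (0 : ℝ))) = 0 from rfl, M.act0] at this
  have hwb : M.w (-1, 0) b' < ξ := by
    have h1 : b' < M.w (1, 0) ξ := lt_of_lt_of_le hb'mem.2 (min_le_right _ _)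
    have h2 := M.strictMonoW (-1, 0) h1
    have h3 : M.w (-1, 0) (M.w (1, 0) ξ) = ξ := by
      rw [show ((-1 : ℤ), (0 : ℝ)) = -((1 : ℤ), (0 : ℝ)) by simp [Prod.ext_iff]]
      exact M.leftInv _ _
    rwa [h3] at h2
  obtain ⟨a', ha'mem, ha'fix⟩ := M.exists_notFix_Ioo
    (x := max (max (ξ - ε / 2) (M.w (-1, 0) ξ)) (M.w (-1, 0) b')) (y := ξ)
    (max_lt (max_lt (by linarith) hwm1) hwb)
  set a := (φ.symm a').1 with ha
  set b := (φ.symm b').1 with hb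
  have hπa : F.π a = s := (φ.symm a').2
  have hπb : F.π b = s := (φ.symm b').2
  have hca : φ ⟨a, hπa⟩ = a' := d_coord F hQ1 s a'
  have hcb : φ ⟨b, hπb⟩ = b' := d_coord F hQ1 s b'
  have hafix : a ∉ F.rFixed := fun h => ha'fix ((d_symm_fix F hQ1).mp h)
  have hbfix : b ∉ F.rFixed := fun h => hb'fix ((d_symm_fix F hQ1).mp h)
  have ha'ξ : a' < ξ := ha'mem.2
  have hξb' : ξ < b' := hb'mem.1
  refine ⟨a, b, hπa, hπb, hafix, hbfix, ?_, ?_, ?_, ?_, ?_⟩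
  · rw [d_slt F hQ1 hπa (rfl : F.π x = s), hca]
    exact ha'ξ
  · rw [d_slt F hQ1 (rfl : F.π x = s) hπb, hcb]
    exact hξb'
  · rw [d_slt F hQ1 (by rw [F.act_fiber]; exact hπb : F.π (F.act (-1, 0) b) = s) hπa,
      d_act F hQ1 hπb, hcb, hca]
    exact lt_of_le_of_lt (le_max_right _ _) ha'mem.1
  · rw [d_slt F hQ1 (by rw [F.act_fiber] : F.π (F.act (-1, 0) x) = s) hπa,
      d_act F hQ1 rfl, hca]
    exact lt_of_le_of_lt (le_trans (le_max_right _ _) (le_max_left _ _)) ha'mem.1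
  · intro z hz h1 h2
    rw [d_le F hQ1 hπa hz, hca] at h1
    rw [d_le F hQ1 hz hπb, hcb] at h2
    have hζ : φ ⟨z, hz⟩ ∈ Metric.ball ξ ε := by
      rw [Metric.mem_ball, Real.dist_eq, abs_lt]
      have l1 : ξ - ε / 2 < a' := lt_of_le_of_lt (le_trans (le_max_left _ _) (le_max_left _ _))
        ha'mem.1
      have l2 : b' < ξ + ε / 2 := lt_of_lt_of_le hb'mem.2 (min_le_left _ _)
      constructor <;> [linarith; linarith]
    have := hball hζ
    simp only [mem_preimage, Homeomorph.symm_apply_apply] at this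
    exact this

end Part4

section Part4b

variable {S E : Type*} [TopologicalSpace S] [TopologicalSpace E]
variable (F : PreFamily S E)

lemma isClosed_fle_set (hQ4 : F.Q4) {X : Type*} [TopologicalSpace X] {u v : X → E}
    (hu : Continuous u) (hv : Continuous v) (hfib : ∀ z, F.π (u z) = F.π (v z)) :
    IsClosed {z | F.fle (u z) (v z)} := by
  have hmap : Continuous fun z => (⟨(u z, v z), hfib z⟩ : F.fibProd) :=
    Continuous.subtype_mk (hu.prodMk hv) _
  exact hQ4.preimage hmap

lemma isOpen_fslt_set (hQ4 : F.Q4) {X : Type*} [TopologicalSpace X] {u v : X → E}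
    (hu : Continuous u) (hv : Continuous v) (hfib : ∀ z, F.π (u z) = F.π (v z)) :
    IsOpen {z | fslt F (u z) (v z)} := by
  have hcl : IsClosed {z | F.fle (v z) (u z)} :=
    isClosed_fle_set F hQ4 hv hu fun z => (hfib z).symm
  have heq : {z | fslt F (u z) (v z)} = {z | F.fle (v z) (u z)}ᶜ := by
    ext z
    simp only [mem_setOf_eq, mem_compl_iff]
    constructor
    · exact fun h => h.2
    · intro h
      rcases F.fle_total (u z) (v z) (hfib z) with h1 | h1
      · exact ⟨h1, h⟩
      · exact absurd h1 h
  rw [heq]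
  exact hcl.isOpen_compl

lemma zrel_equivalence : Equivalence F.zrel := by
  constructor
  · exact fun x => ⟨0, F.act_zero x⟩
  · rintro x y ⟨n, rfl⟩
    exact ⟨-n, by rw [act_act, show (-(n:ℤ), (0:ℝ)) + (n, 0) = 0 by simp [Prod.ext_iff], F.act_zero]⟩
  · rintro x y z ⟨n, rfl⟩ ⟨m, rfl⟩
    exact ⟨m + n, by rw [act_act, show ((m:ℤ), (0:ℝ)) + (n, 0) = (m + n, 0) by simp [Prod.ext_iff]]⟩

lemma quot_mk_eq_iff {x y : E} : Quot.mk F.zrel x = Quot.mk F.zrel y ↔ F.zrel x y := by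
  rw [Quot.eq]
  exact (zrel_equivalence F).eqvGen_iff

lemma qπ_cont : Continuous F.qπ := continuous_quot_lift _ F.π_cont

/-- The escape lemma: the image under `π` of a `ℤ`-saturated set that is closed in `π ⁻¹ U`
can be removed from `U` to leave an open set. -/
lemma tube_escape (hQ3 : F.Q3) {U : Set S} (hU : IsOpen U) {D : Set E} (hD : IsClosed D)
    (hsat : ∀ x ∈ D ∩ F.π ⁻¹' U, ∀ n : ℤ, F.act (n, 0) x ∈ D) :
    IsOpen (U \ F.π '' (D ∩ F.π ⁻¹' U)) := by
  set C : Set E := D ∩ F.π ⁻¹' U with hC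
  set p : E → F.ZQuot := Quot.mk F.zrel with hp
  set Cq : Set F.ZQuot := p '' C with hCq
  have hqπp : ∀ x : E, F.qπ (p x) = F.π x := fun x => rfl
  have hVopen : IsOpen (F.qπ ⁻¹' U) := hU.preimage (qπ_cont F)
  have hpreim : p ⁻¹' Cq ∩ F.π ⁻¹' U = C := by
    apply Subset.antisymm
    · rintro x ⟨hx1, hx2⟩
      obtain ⟨y, hy, hyx⟩ := hx1
      obtain ⟨n, rfl⟩ := (quot_mk_eq_iff F).mp hyx
      exact ⟨hsat y hy n, hx2⟩
    · intro x hx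
      exact ⟨⟨x, hx, rfl⟩, hx.2⟩
  have hAopen : IsOpen ((F.qπ ⁻¹' U) \ Cq) := by
    refine (isQuotientMap_quot_mk (r := F.zrel)).isOpen_preimage.mp ?_
    have hpre : p ⁻¹' ((F.qπ ⁻¹' U) \ Cq) = (F.π ⁻¹' U) \ C := by
      rw [preimage_diff]
      have h1 : p ⁻¹' (F.qπ ⁻¹' U) = F.π ⁻¹' U := rfl
      rw [h1]
      ext x
      simp only [mem_diff, mem_preimage]
      constructor
      · rintro ⟨hx1, hx2⟩
        exact ⟨hx1, fun hxc => hx2 (by rw [← hpreim] at hxc; exact hxc.1)⟩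
      · rintro ⟨hx1, hx2⟩
        refine ⟨hx1, fun hxc => hx2 ?_⟩
        rw [← hpreim]
        exact ⟨hxc, hx1⟩
    show IsOpen (p ⁻¹' _)
    rw [hpre]
    have : (F.π ⁻¹' U) \ C = (F.π ⁻¹' U) ∩ Dᶜ := by
      rw [hC]
      ext x
      simp only [mem_diff, mem_inter_iff, mem_compl_iff, mem_preimage]
      tauto
    rw [this]
    exact (hU.preimage F.π_cont).inter hD.isOpen_compl
  -- main closure argument
  have hK : IsClosed (F.qπ '' (closure Cq)) := hQ3 _ isClosed_closure
  have hUK : U ∩ F.qπ '' (closure Cq) = F.π '' C := by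
    apply Subset.antisymm
    · rintro u ⟨hu, ω, hω, rfl⟩
      have hωU : ω ∈ F.qπ ⁻¹' U := hu
      have hωC : ω ∈ Cq := by
        by_contra hnot
        have : ω ∈ (F.qπ ⁻¹' U) \ Cq := ⟨hωU, hnot⟩
        obtain ⟨ω', hω'A, hω'C⟩ :=
          mem_closure_iff.mp hω _ hAopen this
        exact hω'A.2 hω'C
      obtain ⟨x, hx, rfl⟩ := hωC
      exact ⟨x, hx, rfl⟩
    · rintro y ⟨x, hx, rfl⟩
      exact ⟨hx.2, p x, subset_closure ⟨x, hx, rfl⟩, rfl⟩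
  have : U \ F.π '' C = U ∩ (F.qπ '' (closure Cq))ᶜ := by
    rw [← hUK]
    ext u
    simp only [mem_diff, mem_inter_iff, mem_compl_iff]
    tauto
  rw [this]
  exact hU.inter hK.isOpen_compl

lemma sandwich (hQ1 : F.Q1) {αu βu x : E} (hα : F.π x = F.π αu) (hβ : F.π x = F.π βu)
    (hAB : ∀ n : ℤ, F.fle x (F.act (n, 0) βu) ∨ F.fle (F.act (n + 1, 0) αu) x) :
    ∃ m : ℤ, F.fle (F.act (m, 0) αu) x ∧ F.fle x (F.act (m, 0) βu) := by
  set Z : ℤ → Prop := fun n => F.fle (F.act (n, 0) αu) x with hZ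
  have hne : ∃ n, Z n := by
    obtain ⟨n, hn⟩ := cofin_dn F hQ1 hα
    exact ⟨n, hn⟩
  have hbdd : ∃ k : ℤ, ∀ n, Z n → n ≤ k := by
    obtain ⟨k, hk⟩ := cofin_up F hQ1 hα
    refine ⟨k, fun n hn => ?_⟩
    by_contra hc
    push_neg at hc
    have h1 : F.fle (F.act (k + 1, 0) αu) x :=
      F.fle_trans _ _ _ (self_mono F hQ1 αu (by omega : (k + 1 : ℤ) ≤ n)) hn
    have h2 : fslt F (F.act (k, 0) αu) (F.act (k + 1, 0) αu) :=
      self_strict F hQ1 αu (by omega)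
    exact h2.2 (F.fle_trans _ _ _ h1 hk)
  obtain ⟨m, hmZ, hmax⟩ := Int.exists_greatest_of_bdd hbdd hne
  refine ⟨m, hmZ, ?_⟩
  rcases hAB m with h | h
  · exact h
  · exact absurd (hmax (m + 1) h) (by omega)

end Part4b

end BPAux


/-- A continuous `ℝ`-equivariant map of families with `I`-sections, compatible
with the sections and covering a homeomorphism of the bases, is an isomorphism
of families. -/
theorem isSection_compatible_isHomeomorph {I S T E E' : Type*}
    [TopologicalSpace S] [TopologicalSpace T] [TopologicalSpace E] [TopologicalSpace E']
    (D : IdxData I) (hD : D.IsParacyclicPreorder)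
    (F : PreFamily S E) (G : PreFamily T E')
    (hF : F.IsFamily) (hG : G.IsFamily)
    (σ : S × I → E) (τ : T × I → E')
    (hσ : F.IsISection D σ) (hτ : G.IsISection D τ)
    (f : S ≃ₜ T) (ft : E → E') (hft : Continuous ft)
    (hcomm : ∀ x, G.π (ft x) = f (F.π x))
    (heq : ∀ (t : ℝ) (x : E), ft (F.act (0, t) x) = G.act (0, t) (ft x))
    (hsec : ∀ (s : S) (i : I), ft (σ (s, i)) = τ (f s, i)) :
    IsHomeomorph ft := by
  classical
  obtain ⟨hQ1F, hQ2F, hQ3F, hQ4F, hQ5F⟩ := hF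
  obtain ⟨hQ1G, hQ2G, hQ3G, hQ4G, hQ5G⟩ := hG
  have hftπ : ∀ (s : S) (x : E), F.π x = s → G.π (ft x) = f s := fun s x hx => by
    rw [hcomm, hx]
  -- the coordinate representation of `ft` on the fiber over `s`
  set gm : S → ℝ → ℝ := fun s r =>
    BPAux.fiberHomeo G hQ1G (f s)
      ⟨ft ((BPAux.fiberHomeo F hQ1F s).symm r).1,
        hftπ s _ ((BPAux.fiberHomeo F hQ1F s).symm r).2⟩ with hgmdef
  have hgm_coord : ∀ (s : S) (x : E) (hx : F.π x = s),
      gm s (BPAux.fiberHomeo F hQ1F s ⟨x, hx⟩)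
        = BPAux.fiberHomeo G hQ1G (f s) ⟨ft x, hftπ s x hx⟩ := by
    intro s x hx
    have h1 : (((BPAux.fiberHomeo F hQ1F s).symm
        (BPAux.fiberHomeo F hQ1F s ⟨x, hx⟩)).1) = x :=
      congrArg Subtype.val (Homeomorph.symm_apply_apply _ _)
    exact congrArg (BPAux.fiberHomeo G hQ1G (f s)) (Subtype.ext (congrArg ft h1))
  have hkey : ∀ s : S, StrictMono (gm s) ∧ Function.Surjective (gm s) := by
    intro s
    refine BPAux.key (I := I) (BPAux.fiberModel F hQ1F s) (BPAux.fiberModel G hQ1G (f s))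
      (gm s) ?_ (fun i => BPAux.fiberHomeo F hQ1F s ⟨σ (s, i), hσ.sect s i⟩)
      (fun i => BPAux.fiberHomeo G hQ1G (f s) ⟨τ (f s, i), hτ.sect (f s) i⟩)
      ?_ ?_ ?_ ?_ ?_ ?_
    · -- continuity of gm s
      exact (BPAux.fiberHomeo G hQ1G (f s)).continuous.comp
        (Continuous.subtype_mk
          (hft.comp (continuous_subtype_val.comp (BPAux.fiberHomeo F hQ1F s).symm.continuous)) _)
    · -- sections not fixed (source)
      intro i h
      exact hσ.not_fixed s i ((BPAux.d_fix F hQ1F (hσ.sect s i)).mpr h)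
    · -- sections not fixed (target)
      intro i h
      exact hτ.not_fixed (f s) i ((BPAux.d_fix G hQ1G (hτ.sect (f s) i)).mpr h)
    · -- surjectivity of source sections
      intro r hr
      have hz := ((BPAux.fiberHomeo F hQ1F s).symm r).2
      have hznf : ((BPAux.fiberHomeo F hQ1F s).symm r).1 ∉ F.rFixed := fun h =>
        hr ((BPAux.d_symm_fix F hQ1F).mp h)
      obtain ⟨i, t, ht⟩ := hσ.surj s _ hz hznf
      refine ⟨i, t, ?_⟩
      rw [← BPAux.d_act F hQ1F (hσ.sect s i)]
      have h2 : (⟨F.act (0, t) (σ (s, i)), by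
          rw [F.act_fiber]; exact hσ.sect s i⟩ : {x : E // F.π x = s})
          = ⟨((BPAux.fiberHomeo F hQ1F s).symm r).1, hz⟩ := Subtype.ext ht
      rw [h2]
      exact BPAux.d_coord F hQ1F s r
    · -- surjectivity of target sections
      intro r hr
      have hz := ((BPAux.fiberHomeo G hQ1G (f s)).symm r).2
      have hznf : ((BPAux.fiberHomeo G hQ1G (f s)).symm r).1 ∉ G.rFixed := fun h =>
        hr ((BPAux.d_symm_fix G hQ1G).mp h)
      obtain ⟨i, t, ht⟩ := hτ.surj (f s) _ hz hznf
      refine ⟨i, t, ?_⟩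
      rw [← BPAux.d_act G hQ1G (hτ.sect (f s) i)]
      have h2 : (⟨G.act (0, t) (τ (f s, i)), by
          rw [G.act_fiber]; exact hτ.sect (f s) i⟩ : {y : E' // G.π y = f s})
          = ⟨((BPAux.fiberHomeo G hQ1G (f s)).symm r).1, hz⟩ := Subtype.ext ht
      rw [h2]
      exact BPAux.d_coord G hQ1G (f s) r
    · -- equivariance
      intro t r
      set zv := ((BPAux.fiberHomeo F hQ1F s).symm r).1 with hzv
      have hz : F.π zv = s := ((BPAux.fiberHomeo F hQ1F s).symm r).2
      have hz' : F.π (F.act (0, t) zv) = s := by rw [F.act_fiber]; exact hz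
      have h2 : (BPAux.fiberModel F hQ1F s).w (0, t) r
          = BPAux.fiberHomeo F hQ1F s ⟨F.act (0, t) zv, hz'⟩ := by
        rw [BPAux.d_act F hQ1F hz, BPAux.d_coord F hQ1F s r]
      rw [h2, hgm_coord s _ hz']
      have h3 : (⟨ft (F.act (0, t) zv), hftπ s _ hz'⟩ : {y : E' // G.π y = f s})
          = ⟨G.act (0, t) (ft zv), by rw [G.act_fiber]; exact hftπ s zv hz⟩ :=
        Subtype.ext (heq t zv)
      rw [h3, BPAux.d_act G hQ1G (hftπ s zv hz)]
    · -- compatibility with the sections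
      intro i
      rw [hgm_coord s _ (hσ.sect s i)]
      exact congrArg (BPAux.fiberHomeo G hQ1G (f s)) (Subtype.ext (hsec s i))
  -- global order and bijectivity consequences
  have hftle : ∀ {x y : E}, F.π x = F.π y → (F.fle x y ↔ G.fle (ft x) (ft y)) := by
    intro x y h
    rw [BPAux.d_le F hQ1F (h : F.π x = F.π y) rfl,
      BPAux.d_le G hQ1G (hftπ (F.π y) x h) (hftπ (F.π y) y rfl),
      ← hgm_coord (F.π y) x h, ← hgm_coord (F.π y) y rfl]
    exact ((hkey (F.π y)).1.le_iff_le).symm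
  have hftinj : Function.Injective ft := by
    intro x y hxy
    have hππ : F.π x = F.π y := f.injective (by
      rw [← hcomm, ← hcomm, hxy])
    have h1 : gm (F.π y) (BPAux.fiberHomeo F hQ1F (F.π y) ⟨x, hππ⟩)
        = gm (F.π y) (BPAux.fiberHomeo F hQ1F (F.π y) ⟨y, rfl⟩) := by
      rw [hgm_coord _ x hππ, hgm_coord _ y rfl]
      exact congrArg _ (Subtype.ext hxy)
    have h2 := (hkey (F.π y)).1.injective h1
    have h3 := (BPAux.fiberHomeo F hQ1F (F.π y)).injective h2
    exact congrArg Subtype.val h3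
  have hftsurj : Function.Surjective ft := by
    intro y'
    have hy' : G.π y' = f (f.symm (G.π y')) := (f.apply_symm_apply _).symm
    obtain ⟨r, hr⟩ := (hkey (f.symm (G.π y'))).2
      (BPAux.fiberHomeo G hQ1G (f (f.symm (G.π y'))) ⟨y', hy'⟩)
    refine ⟨((BPAux.fiberHomeo F hQ1F (f.symm (G.π y'))).symm r).1, ?_⟩
    have h2 := (BPAux.fiberHomeo G hQ1G (f (f.symm (G.π y')))).injective hr
    exact congrArg Subtype.val h2
  have hftslt : ∀ {x y : E}, F.π x = F.π y →
      (BPAux.fslt F x y ↔ BPAux.fslt G (ft x) (ft y)) := by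
    intro x y h
    unfold BPAux.fslt
    rw [hftle h, hftle h.symm]
  have hactc : ∀ g : ℤ × ℝ, Continuous (F.act g) := fun g =>
    F.act_cont.comp (continuous_const.prodMk continuous_id)
  have hact10 : ∀ x : E, F.act (1, 0) (F.act (-1, 0) x) = x := fun x => by
    rw [BPAux.act_act, show ((1 : ℤ), (0 : ℝ)) + (-1, 0) = 0 by simp [Prod.ext_iff], F.act_zero]
  have hopen : IsOpenMap ft := by
    intro W hW
    rw [isOpen_iff_forall_mem_open]
    rintro y₀ ⟨x₀, hx₀W, rfl⟩
    obtain ⟨a, b, hπa, hπb, hanf, hbnf, hax, hxb, hba1, hxa1, hintW⟩ :=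
      BPAux.interval_basis F hQ1F hW hx₀W
    obtain ⟨Ua, hUao, hsUa, α₀, hα₀c, hα₀s, hα₀nf, hα₀v⟩ := hQ5F a hanf
    obtain ⟨Ub, hUbo, hsUb, β₀, hβ₀c, hβ₀s, hβ₀nf, hβ₀v⟩ := hQ5F b hbnf
    set s₀ := F.π x₀ with hs₀def
    set U₁ : Set S := Ua ∩ Ub with hU₁def
    have hU₁o : IsOpen U₁ := hUao.inter hUbo
    have hs₀U₁ : s₀ ∈ U₁ := ⟨by rw [← hπa]; exact hsUa, by rw [← hπb]; exact hsUb⟩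
    set α : U₁ → E := fun u => α₀ (Set.inclusion Set.inter_subset_left u) with hαdef
    set β : U₁ → E := fun u => β₀ (Set.inclusion Set.inter_subset_right u) with hβdef
    have hαc : Continuous α := hα₀c.comp (continuous_inclusion _)
    have hβc : Continuous β := hβ₀c.comp (continuous_inclusion _)
    have hαs : ∀ u : U₁, F.π (α u) = ↑u := fun u => hα₀s _
    have hβs : ∀ u : U₁, F.π (β u) = ↑u := fun u => hβ₀s _
    have hαv : α ⟨s₀, hs₀U₁⟩ = a := hα₀v _ hπa.symm
    have hβv : β ⟨s₀, hs₀U₁⟩ = b := hβ₀v _ hπb.symm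
    have hXo : IsOpen (F.π ⁻¹' U₁) := hU₁o.preimage F.π_cont
    set bp : (F.π ⁻¹' U₁ : Set E) → U₁ := fun x => ⟨F.π x.1, x.2⟩ with hbpdef
    have hbpc : Continuous bp := Continuous.subtype_mk (F.π_cont.comp continuous_subtype_val) _
    set O : Set E := {x | ∃ h : F.π x ∈ U₁,
      BPAux.fslt F (F.act (-1, 0) (β ⟨F.π x, h⟩)) x ∧
      BPAux.fslt F x (F.act (1, 0) (α ⟨F.π x, h⟩))} with hOdef
    have hOo : IsOpen O := by
      have h1 : IsOpen {x : (F.π ⁻¹' U₁ : Set E) |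
          BPAux.fslt F (F.act (-1, 0) (β (bp x))) x.1} :=
        BPAux.isOpen_fslt_set F hQ4F ((hactc _).comp (hβc.comp hbpc)) continuous_subtype_val
          (fun x => by rw [F.act_fiber, hβs])
      have h2 : IsOpen {x : (F.π ⁻¹' U₁ : Set E) |
          BPAux.fslt F x.1 (F.act (1, 0) (α (bp x)))} :=
        BPAux.isOpen_fslt_set F hQ4F continuous_subtype_val ((hactc _).comp (hαc.comp hbpc))
          (fun x => by rw [F.act_fiber, hαs])
      have hOeq : O = Subtype.val ''
          ({x | BPAux.fslt F (F.act (-1, 0) (β (bp x))) x.1} ∩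
            {x | BPAux.fslt F x.1 (F.act (1, 0) (α (bp x)))}) := by
        ext x
        constructor
        · rintro ⟨h, h1, h2⟩
          exact ⟨⟨x, h⟩, ⟨h1, h2⟩, rfl⟩
        · rintro ⟨x', ⟨h1, h2⟩, rfl⟩
          exact ⟨x'.2, h1, h2⟩
      rw [hOeq]
      exact hXo.isOpenMap_subtype_val _ (h1.inter h2)
    set W₂ : Set E := W ∩ O with hW₂def
    have hW₂o : IsOpen W₂ := hW.inter hOo
    set A : ℤ → Set (F.π ⁻¹' U₁ : Set E) :=
      fun n => {x | F.fle x.1 (F.act (n, 0) (β (bp x)))} with hAdef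
    set B : ℤ → Set (F.π ⁻¹' U₁ : Set E) :=
      fun n => {x | F.fle (F.act (n, 0) (α (bp x))) x.1} with hBdef
    have hAc : ∀ n, IsClosed (A n) := fun n =>
      BPAux.isClosed_fle_set F hQ4F continuous_subtype_val ((hactc _).comp (hβc.comp hbpc))
        (fun x => by rw [F.act_fiber, hβs])
    have hBc : ∀ n, IsClosed (B n) := fun n =>
      BPAux.isClosed_fle_set F hQ4F ((hactc _).comp (hαc.comp hbpc)) continuous_subtype_val
        (fun x => by rw [F.act_fiber, hαs])
    set WZ : ℤ → Set (F.π ⁻¹' U₁ : Set E) := fun n => {x | F.act (-n, 0) x.1 ∈ W₂} with hWZdef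
    have hWZo : ∀ n, IsOpen (WZ n) := fun n =>
      hW₂o.preimage ((hactc _).comp continuous_subtype_val)
    set Ccore : Set (F.π ⁻¹' U₁ : Set E) :=
      (⋂ n : ℤ, (A n ∪ B (n + 1))) \ (⋃ n : ℤ, WZ n) with hCcoredef
    have hCcl : IsClosed Ccore :=
      (isClosed_iInter fun n => (hAc n).union (hBc (n + 1))).sdiff (isOpen_iUnion hWZo)
    obtain ⟨D, hDcl, hDeq⟩ := isClosed_induced_iff.mp hCcl
    set C : Set E := Subtype.val '' Ccore with hCdef
    have hCD : C = D ∩ F.π ⁻¹' U₁ := by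
      rw [hCdef, ← hDeq]
      ext x
      constructor
      · rintro ⟨x', hx', rfl⟩
        exact ⟨hx', x'.2⟩
      · rintro ⟨h1, h2⟩
        exact ⟨⟨x, h2⟩, h1, rfl⟩
    have hCsat : ∀ x ∈ C, ∀ n : ℤ, F.act (n, 0) x ∈ C := by
      rintro x ⟨x', hx', rfl⟩ n
      have hmem : F.π (F.act (n, 0) x'.1) ∈ U₁ := by rw [F.act_fiber]; exact x'.2
      have hbpx : bp ⟨F.act (n, 0) x'.1, hmem⟩ = bp x' := Subtype.ext (F.act_fiber _ _)
      refine ⟨⟨F.act (n, 0) x'.1, hmem⟩, ⟨?_, ?_⟩, rfl⟩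
      · rw [Set.mem_iInter]
        intro k
        have hk := Set.mem_iInter.mp hx'.1 (k - n)
        rcases hk with h | h
        · left
          show F.fle (F.act (n, 0) x'.1) (F.act (k, 0) (β (bp ⟨F.act (n, 0) x'.1, hmem⟩)))
          rw [hbpx]
          have h2 := BPAux.act_mono F hQ1F (x := x'.1)
            (y := F.act (k - n, 0) (β (bp x'))) (by rw [F.act_fiber, hβs])
            ((n : ℤ), (0 : ℝ)) h
          rwa [BPAux.act_act,
            show ((n : ℤ), (0 : ℝ)) + (k - n, 0) = (k, 0) by simp [Prod.ext_iff]] at h2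
        · right
          show F.fle (F.act (k + 1, 0) (α (bp ⟨F.act (n, 0) x'.1, hmem⟩))) (F.act (n, 0) x'.1)
          rw [hbpx]
          have h2 := BPAux.act_mono F hQ1F (x := F.act (k - n + 1, 0) (α (bp x')))
            (y := x'.1) (by rw [F.act_fiber, hαs]) ((n : ℤ), (0 : ℝ)) h
          rwa [BPAux.act_act,
            show ((n : ℤ), (0 : ℝ)) + (k - n + 1, 0) = (k + 1, 0) by
              simp [Prod.ext_iff]; ring] at h2
      · intro hcon
        obtain ⟨m, hm⟩ := Set.mem_iUnion.mp hcon
        refine hx'.2 (Set.mem_iUnion.mpr ⟨m - n, ?_⟩)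
        show F.act (-(m - n), 0) x'.1 ∈ W₂
        have heqa : F.act (-m, 0) (F.act (n, 0) x'.1) = F.act (-(m - n), 0) x'.1 := by
          rw [BPAux.act_act,
            show ((-m : ℤ), (0 : ℝ)) + (n, 0) = (-(m - n), 0) by simp [Prod.ext_iff]; ring]
        have hm' : F.act (-m, 0) (F.act (n, 0) x'.1) ∈ W₂ := hm
        rwa [heqa] at hm'
    have hUesc : IsOpen (U₁ \ F.π '' C) := by
      have hesc := BPAux.tube_escape F hQ3F hU₁o hDcl (by
        intro x hx n
        have hxC : x ∈ C := by rw [hCD]; exact hx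
        have h2 := hCsat x hxC n
        rw [hCD] at h2
        exact h2.1)
      rwa [← hCD] at hesc
    have hs₀C : s₀ ∉ F.π '' C := by
      rintro ⟨x, hxC, hπx⟩
      obtain ⟨x', hx', rfl⟩ := hxC
      have hbpx : bp x' = ⟨s₀, hs₀U₁⟩ := Subtype.ext hπx
      have hAB : ∀ n : ℤ, F.fle x'.1 (F.act (n, 0) b) ∨ F.fle (F.act (n + 1, 0) a) x'.1 := by
        intro n
        have hk := Set.mem_iInter.mp hx'.1 n
        rcases hk with h | h
        · left
          show F.fle x'.1 (F.act (n, 0) b)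
          have h2 : F.fle x'.1 (F.act (n, 0) (β (bp x'))) := h
          rwa [hbpx, hβv] at h2
        · right
          have h2 : F.fle (F.act (n + 1, 0) (α (bp x'))) x'.1 := h
          rwa [hbpx, hαv] at h2
      obtain ⟨m, hm1, hm2⟩ := BPAux.sandwich F hQ1F
        (by rw [hπx, hπa] : F.π x'.1 = F.π a)
        (by rw [hπx, hπb] : F.π x'.1 = F.π b) hAB
      have hπy : F.π (F.act (-m, 0) x'.1) = s₀ := by rw [F.act_fiber, hπx]
      have hay : F.fle a (F.act (-m, 0) x'.1) := by
        have h2 := BPAux.act_mono F hQ1F (x := F.act (m, 0) a) (y := x'.1)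
          (by rw [F.act_fiber, hπa, hπx]) ((-m : ℤ), (0 : ℝ)) hm1
        rwa [BPAux.act_act,
          show ((-m : ℤ), (0 : ℝ)) + (m, 0) = 0 by simp [Prod.ext_iff], F.act_zero] at h2
      have hyb : F.fle (F.act (-m, 0) x'.1) b := by
        have h2 := BPAux.act_mono F hQ1F (x := x'.1) (y := F.act (m, 0) b)
          (by rw [F.act_fiber, hπb, hπx]) ((-m : ℤ), (0 : ℝ)) hm2
        rwa [BPAux.act_act,
          show ((-m : ℤ), (0 : ℝ)) + (m, 0) = 0 by simp [Prod.ext_iff], F.act_zero] at h2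
      have hyW : F.act (-m, 0) x'.1 ∈ W := hintW _ hπy hay hyb
      have hyO : F.act (-m, 0) x'.1 ∈ O := by
        refine ⟨by rw [hπy]; exact hs₀U₁, ?_, ?_⟩
        · have hsub : (⟨F.π (F.act (-m, 0) x'.1), by rw [hπy]; exact hs₀U₁⟩ : U₁)
              = ⟨s₀, hs₀U₁⟩ := Subtype.ext hπy
          rw [hsub, hβv]
          exact BPAux.fslt_trans_le F hba1 hay
        · have hsub : (⟨F.π (F.act (-m, 0) x'.1), by rw [hπy]; exact hs₀U₁⟩ : U₁)
              = ⟨s₀, hs₀U₁⟩ := Subtype.ext hπy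
          rw [hsub, hαv]
          have h3 := BPAux.act_slt F hQ1F (x := F.act (-1, 0) b) (y := a)
            (by rw [F.act_fiber, hπb, hπa]) ((1 : ℤ), (0 : ℝ)) hba1
          rw [hact10 b] at h3
          exact BPAux.fle_trans_slt F hyb h3
      exact hx'.2 (Set.mem_iUnion.mpr ⟨m, show F.act (-m, 0) x'.1 ∈ W₂ from ⟨hyW, hyO⟩⟩)
    set U : Set S := U₁ \ F.π '' C with hUdef
    have hUo : IsOpen U := hUesc
    have hs₀U : s₀ ∈ U := ⟨hs₀U₁, hs₀C⟩
    set Tb : Set E := {x | ∃ h : F.π x ∈ U,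
      BPAux.fslt F (α ⟨F.π x, h.1⟩) x ∧ BPAux.fslt F x (β ⟨F.π x, h.1⟩)} with hTbdef
    have hTbo : IsOpen Tb := by
      have hXUo : IsOpen (F.π ⁻¹' U) := hUo.preimage F.π_cont
      set bq : (F.π ⁻¹' U : Set E) → U₁ := fun x => ⟨F.π x.1, x.2.1⟩ with hbqdef
      have hbqc : Continuous bq := Continuous.subtype_mk (F.π_cont.comp continuous_subtype_val) _
      have h1 : IsOpen {x : (F.π ⁻¹' U : Set E) | BPAux.fslt F (α (bq x)) x.1} :=
        BPAux.isOpen_fslt_set F hQ4F (hαc.comp hbqc) continuous_subtype_val (fun x => hαs _)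
      have h2 : IsOpen {x : (F.π ⁻¹' U : Set E) | BPAux.fslt F x.1 (β (bq x))} :=
        BPAux.isOpen_fslt_set F hQ4F continuous_subtype_val (hβc.comp hbqc)
          (fun x => (hβs (bq x)).symm)
      have hTeq : Tb = Subtype.val ''
          ({x | BPAux.fslt F (α (bq x)) x.1} ∩ {x | BPAux.fslt F x.1 (β (bq x))}) := by
        ext x
        constructor
        · rintro ⟨h, h1, h2⟩
          exact ⟨⟨x, h⟩, ⟨h1, h2⟩, rfl⟩
        · rintro ⟨x', ⟨h1, h2⟩, rfl⟩
          exact ⟨x'.2, h1, h2⟩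
      rw [hTeq]
      exact hXUo.isOpenMap_subtype_val _ (h1.inter h2)
    have hx₀T : x₀ ∈ Tb := by
      refine ⟨hs₀U, ?_, ?_⟩
      · rw [show α ⟨F.π x₀, hs₀U.1⟩ = a from hαv]
        exact hax
      · rw [show β ⟨F.π x₀, hs₀U.1⟩ = b from hβv]
        exact hxb
    have hTW : Tb ⊆ W := by
      rintro x ⟨hxU, h1, h2⟩
      have hxX : x ∈ F.π ⁻¹' U₁ := hxU.1
      have hxAB : (⟨x, hxX⟩ : (F.π ⁻¹' U₁ : Set E)) ∈ ⋂ n : ℤ, (A n ∪ B (n + 1)) := by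
        rw [Set.mem_iInter]
        intro n
        rcases le_or_gt 0 n with hn | hn
        · left
          show F.fle x (F.act (n, 0) (β (bp ⟨x, hxX⟩)))
          refine F.fle_trans _ _ _ h2.1 ?_
          have h3 := BPAux.self_mono F hQ1F (β (bp ⟨x, hxX⟩)) (hn : (0 : ℤ) ≤ n)
          rwa [show F.act ((0 : ℤ), (0 : ℝ)) (β (bp ⟨x, hxX⟩)) = β (bp ⟨x, hxX⟩) from
            F.act_zero _] at h3
        · right
          show F.fle (F.act (n + 1, 0) (α (bp ⟨x, hxX⟩))) x
          refine F.fle_trans _ _ _ ?_ h1.1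
          have h3 := BPAux.self_mono F hQ1F (α (bp ⟨x, hxX⟩)) (by omega : (n + 1 : ℤ) ≤ 0)
          rwa [show F.act ((0 : ℤ), (0 : ℝ)) (α (bp ⟨x, hxX⟩)) = α (bp ⟨x, hxX⟩) from
            F.act_zero _] at h3
      have hxnC : (⟨x, hxX⟩ : (F.π ⁻¹' U₁ : Set E)) ∉ Ccore := by
        intro hc
        exact hxU.2 ⟨x, ⟨⟨x, hxX⟩, hc, rfl⟩, rfl⟩
      have hxWZ : (⟨x, hxX⟩ : (F.π ⁻¹' U₁ : Set E)) ∈ ⋃ n : ℤ, WZ n := by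
        by_contra hnot
        exact hxnC ⟨hxAB, hnot⟩
      obtain ⟨m, hm⟩ := Set.mem_iUnion.mp hxWZ
      have hm' : F.act (-m, 0) x ∈ W₂ := hm
      rcases lt_trichotomy m 0 with hm0 | hm0 | hm0
      · exfalso
        obtain ⟨hz, hc1, hc2⟩ := hm'.2
        have hsub : (⟨F.π (F.act (-m, 0) x), hz⟩ : U₁) = ⟨F.π x, hxU.1⟩ :=
          Subtype.ext (F.act_fiber _ _)
        rw [hsub] at hc2
        have hs1 : F.fle (F.act (-m, 0) (α ⟨F.π x, hxU.1⟩)) (F.act (-m, 0) x) :=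
          BPAux.act_mono F hQ1F (hαs _) ((-m : ℤ), (0 : ℝ)) h1.1
        have hs2 : F.fle (F.act (1, 0) (α ⟨F.π x, hxU.1⟩))
            (F.act (-m, 0) (α ⟨F.π x, hxU.1⟩)) :=
          BPAux.self_mono F hQ1F (α ⟨F.π x, hxU.1⟩) (by omega : (1 : ℤ) ≤ -m)
        exact hc2.2 (F.fle_trans _ _ _ hs2 hs1)
      · have heq0 : F.act (-m, 0) x = x := by
          rw [hm0, show (-(0 : ℤ), (0 : ℝ)) = 0 by simp [Prod.ext_iff], F.act_zero]
        rw [heq0] at hm'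
        exact hm'.1
      · exfalso
        obtain ⟨hz, hc1, hc2⟩ := hm'.2
        have hsub : (⟨F.π (F.act (-m, 0) x), hz⟩ : U₁) = ⟨F.π x, hxU.1⟩ :=
          Subtype.ext (F.act_fiber _ _)
        rw [hsub] at hc1
        have hs1 : F.fle (F.act (-m, 0) x) (F.act (-m, 0) (β ⟨F.π x, hxU.1⟩)) :=
          BPAux.act_mono F hQ1F ((hβs ⟨F.π x, hxU.1⟩).symm) ((-m : ℤ), (0 : ℝ)) h2.1
        have hs2 : F.fle (F.act (-m, 0) (β ⟨F.π x, hxU.1⟩))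
            (F.act (-1, 0) (β ⟨F.π x, hxU.1⟩)) :=
          BPAux.self_mono F hQ1F (β ⟨F.π x, hxU.1⟩) (by omega : (-m : ℤ) ≤ -1)
        exact hc1.2 (F.fle_trans _ _ _ hs1 hs2)
    -- transport the tube to the target
    set V' : Set T := f '' U with hV'def
    have hV'o : IsOpen V' := f.isOpenMap U hUo
    have hV'mem : ∀ v : V', f.symm ↑v ∈ U := by
      rintro ⟨v, hv⟩
      obtain ⟨u, hu, rfl⟩ := hv
      rwa [f.symm_apply_apply]
    set αG : V' → E' := fun v => ft (α ⟨f.symm ↑v, (hV'mem v).1⟩) with hαGdef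
    set βG : V' → E' := fun v => ft (β ⟨f.symm ↑v, (hV'mem v).1⟩) with hβGdef
    have hαGc : Continuous αG := hft.comp (hαc.comp (Continuous.subtype_mk
      (f.symm.continuous.comp continuous_subtype_val) _))
    have hβGc : Continuous βG := hft.comp (hβc.comp (Continuous.subtype_mk
      (f.symm.continuous.comp continuous_subtype_val) _))
    have hαGs : ∀ v : V', G.π (αG v) = ↑v := fun v => by
      show G.π (ft (α ⟨f.symm ↑v, (hV'mem v).1⟩)) = ↑v
      rw [hcomm, hαs, f.apply_symm_apply]
    have hβGs : ∀ v : V', G.π (βG v) = ↑v := fun v => by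
      show G.π (ft (β ⟨f.symm ↑v, (hV'mem v).1⟩)) = ↑v
      rw [hcomm, hβs, f.apply_symm_apply]
    set Tb' : Set E' := {y | ∃ h : G.π y ∈ V',
      BPAux.fslt G (αG ⟨G.π y, h⟩) y ∧ BPAux.fslt G y (βG ⟨G.π y, h⟩)} with hTb'def
    have hTb'o : IsOpen Tb' := by
      have hXVo : IsOpen (G.π ⁻¹' V') := hV'o.preimage G.π_cont
      set bv : (G.π ⁻¹' V' : Set E') → V' := fun y => ⟨G.π y.1, y.2⟩ with hbvdef
      have hbvc : Continuous bv := Continuous.subtype_mk (G.π_cont.comp continuous_subtype_val) _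
      have h1 : IsOpen {y : (G.π ⁻¹' V' : Set E') | BPAux.fslt G (αG (bv y)) y.1} :=
        BPAux.isOpen_fslt_set G hQ4G (hαGc.comp hbvc) continuous_subtype_val
          (fun y => hαGs _)
      have h2 : IsOpen {y : (G.π ⁻¹' V' : Set E') | BPAux.fslt G y.1 (βG (bv y))} :=
        BPAux.isOpen_fslt_set G hQ4G continuous_subtype_val (hβGc.comp hbvc)
          (fun y => (hβGs (bv y)).symm)
      have hTeq : Tb' = Subtype.val ''
          ({y | BPAux.fslt G (αG (bv y)) y.1} ∩ {y | BPAux.fslt G y.1 (βG (bv y))}) := by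
        ext y
        constructor
        · rintro ⟨h, h1, h2⟩
          exact ⟨⟨y, h⟩, ⟨h1, h2⟩, rfl⟩
        · rintro ⟨y', ⟨h1, h2⟩, rfl⟩
          exact ⟨y'.2, h1, h2⟩
      rw [hTeq]
      exact hXVo.isOpenMap_subtype_val _ (h1.inter h2)
    have hftx₀ : ft x₀ ∈ Tb' := by
      have hπft : G.π (ft x₀) ∈ V' := by
        rw [hcomm]
        exact ⟨s₀, hs₀U, rfl⟩
      refine ⟨hπft, ?_, ?_⟩
      · have hsub : (⟨f.symm (G.π (ft x₀)), (hV'mem ⟨G.π (ft x₀), hπft⟩).1⟩ : U₁)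
            = ⟨s₀, hs₀U₁⟩ := by
          apply Subtype.ext
          show f.symm (G.π (ft x₀)) = s₀
          rw [hcomm, f.symm_apply_apply]
        show BPAux.fslt G (ft (α ⟨f.symm (G.π (ft x₀)), (hV'mem ⟨G.π (ft x₀), hπft⟩).1⟩)) (ft x₀)
        rw [hsub, hαv]
        exact (hftslt hπa).mp hax
      · have hsub : (⟨f.symm (G.π (ft x₀)), (hV'mem ⟨G.π (ft x₀), hπft⟩).1⟩ : U₁)
            = ⟨s₀, hs₀U₁⟩ := by
          apply Subtype.ext
          show f.symm (G.π (ft x₀)) = s₀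
          rw [hcomm, f.symm_apply_apply]
        show BPAux.fslt G (ft x₀) (ft (β ⟨f.symm (G.π (ft x₀)), (hV'mem ⟨G.π (ft x₀), hπft⟩).1⟩))
        rw [hsub, hβv]
        exact (hftslt hπb.symm).mp hxb
    have hTb'W : Tb' ⊆ ft '' W := by
      rintro y ⟨hyV, hy1, hy2⟩
      obtain ⟨x, rfl⟩ := hftsurj y
      have h3 : f.symm (G.π (ft x)) ∈ U := hV'mem ⟨G.π (ft x), hyV⟩
      have hπxU : F.π x ∈ U := by
        rwa [hcomm, f.symm_apply_apply] at h3
      have hsub : (⟨f.symm (G.π (ft x)), (hV'mem ⟨G.π (ft x), hyV⟩).1⟩ : U₁)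
          = ⟨F.π x, hπxU.1⟩ := by
        apply Subtype.ext
        show f.symm (G.π (ft x)) = F.π x
        rw [hcomm, f.symm_apply_apply]
      have h3 : αG ⟨G.π (ft x), hyV⟩ = ft (α ⟨F.π x, hπxU.1⟩) :=
        congrArg (fun u => ft (α u)) hsub
      have h4 : βG ⟨G.π (ft x), hyV⟩ = ft (β ⟨F.π x, hπxU.1⟩) :=
        congrArg (fun u => ft (β u)) hsub
      rw [h3] at hy1
      rw [h4] at hy2
      have h5 : BPAux.fslt F (α ⟨F.π x, hπxU.1⟩) x := (hftslt (hαs _)).mpr hy1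
      have h6 : BPAux.fslt F x (β ⟨F.π x, hπxU.1⟩) :=
        (hftslt (hβs ⟨F.π x, hπxU.1⟩).symm).mpr hy2
      exact ⟨x, hTW ⟨hπxU, h5, h6⟩, rfl⟩
    exact ⟨Tb', hTb'W, hTb'o, hftx₀⟩
  exact ⟨hft, hopen, hftinj, hftsurj⟩

end
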